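/- arXiv:2402.14796 — 5 statements merged into one kernel-verified Lean document; each statement's English description precedes it below -/
import Mathlib

section
/- For coprime integers h, k with k > 0, the Dedekind sum s(h,k) = Σ_{r=1}^{k-1} (r/k)(hr/k - ⌊hr/k⌋ - 1/2) is a rational number such that 6k·s(h,k) is an integer. -/
open Matrix MatrixGroups

def dedekindSum (h k : ℤ) : ℚ :=
  ∑ r ∈ Finset.Ico 1 k.toNat, (r : ℚ) / k * ((h * r : ℚ) / k - ⌊(h * r : ℚ) / k⌋ - 1 / 2)

def PsiM (m : Matrix (Fin 2) (Fin 2) ℤ) : ℚ :=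
  if 0 < m 1 0 then (m 0 0 + m 1 1 : ℚ) / (m 1 0 : ℤ) + 12 * dedekindSum (-(m 1 1)) (m 1 0) - 3
  else if m 1 0 < 0 then (m 0 0 + m 1 1 : ℚ) / (m 1 0 : ℤ) + 12 * dedekindSum (m 1 1) (-(m 1 0)) + 3
  else if 0 < m 0 0 then (m 0 1 : ℚ)
  else -(m 0 1 : ℚ) - 6

def PsiZ (m : Matrix (Fin 2) (Fin 2) ℤ) : ℤ := (PsiM m).num

def conjMat (l : ℤ) (m : Matrix (Fin 2) (Fin 2) ℤ) : Matrix (Fin 2) (Fin 2) ℤ :=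
  !![m 0 0, l * m 0 1; m 1 0 / l, m 1 1]

lemma six_mul_sum_sq (n : ℕ) :
    6 * ∑ i ∈ Finset.range n, (i : ℚ) ^ 2 = n * (n - 1) * (2 * n - 1) := by
  induction n with
  | zero => simp
  | succ n ih =>
    rw [Finset.sum_range_succ, mul_add, ih]
    push_cast
    ring

theorem dedekindSum_six_k_int (h k : ℤ) (hk : 0 < k) (hcop : IsCoprime h k) :
    ∃ m : ℤ, (6 * k : ℚ) * dedekindSum h k = (m : ℚ) := by
  have hk0 : (k : ℚ) ≠ 0 := Int.cast_ne_zero.mpr hk.ne'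
  refine ⟨h * (k - 1) * (2 * k - 1) -
    ∑ r ∈ Finset.Ico 1 k.toNat, (6 * r * ⌊(h * r : ℚ) / k⌋ + 3 * r), ?_⟩
  have key : (6 * k : ℚ) * dedekindSum h k =
      (6 * h / k) * ∑ r ∈ Finset.Ico 1 k.toNat, (r : ℚ) ^ 2
      - ∑ r ∈ Finset.Ico 1 k.toNat, ((6 * r * ⌊(h * r : ℚ) / k⌋ + 3 * r : ℤ) : ℚ) := by
    rw [dedekindSum, Finset.mul_sum, Finset.mul_sum, ← Finset.sum_sub_distrib]
    apply Finset.sum_congr rfl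
    intro r _
    push_cast
    field_simp
    ring
  rw [key]
  have hsum : ∑ r ∈ Finset.Ico 1 k.toNat, (r : ℚ) ^ 2
      = ∑ r ∈ Finset.range k.toNat, (r : ℚ) ^ 2 := by
    rw [Finset.range_eq_Ico]
    rw [Finset.sum_eq_sum_Ico_succ_bot (by omega : 0 < k.toNat)]
    simp
  have h6 : 6 * ∑ r ∈ Finset.range k.toNat, (r : ℚ) ^ 2
      = k.toNat * (k.toNat - 1) * (2 * k.toNat - 1) := six_mul_sum_sq _
  have hkt : ((k.toNat : ℚ)) = (k : ℚ) := by
    exact_mod_cast congrArg (Int.cast : ℤ → ℚ) (Int.toNat_of_nonneg hk.le)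
  have : (6 * h / k) * ∑ r ∈ Finset.Ico 1 k.toNat, (r : ℚ) ^ 2
      = h * (k - 1) * (2 * k - 1) := by
    rw [hsum]
    have : (6 : ℚ) * h / k * ∑ r ∈ Finset.range k.toNat, (r:ℚ)^2
        = h / k * (6 * ∑ r ∈ Finset.range k.toNat, (r:ℚ)^2) := by ring
    rw [this, h6, hkt]
    field_simp
  rw [this]
  push_cast
  ring
end

section
/- Define Ψ : SL₂(ℤ) → ℝ by Ψ(⟨a,b;c,d⟩) = (a+d)/c + 12s(-d,c) - 3 if c > 0; (a+d)/c + 12s(d,-c) + 3 if c < 0; b if c = 0 and a > 0; and -b-6 if c = 0 and a < 0. Then Ψ takes values in ℤ, i.e., Ψ(γ) is an integer for every γ ∈ SL₂(ℤ). -/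
open Matrix MatrixGroups

/-- The map `r ↦ h r mod k` permutes the residues `1, …, k-1` when `h` is invertible mod `k`,
hence the sum of squares of `h r mod k` equals the sum of squares of `r`. -/
lemma perm_sum (h a k : ℤ) (hk : 0 < k) (hd : k ∣ h * a - 1) :
    ∑ r ∈ Finset.Ico 1 k.toNat, (h * r % k)^2 = ∑ r ∈ Finset.Ico 1 k.toNat, (r:ℤ)^2 := by
  obtain ⟨m, hm⟩ := hd
  have hcancel : ∀ c x : ℤ, c * (x % k) % k = c * x % k := fun c x => by
    rw [Int.mul_emod, Int.emod_emod_of_dvd _ dvd_rfl, ← Int.mul_emod]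
  have hinv : ∀ c c' : ℤ, c * c' - 1 = k * m → ∀ r ∈ Finset.Ico 1 k.toNat,
      ((c' * ((c * r) % k)) % k).toNat = r := by
    intro c c' hcc r hr
    simp only [Finset.mem_Ico] at hr
    have h1 : (1:ℤ) ≤ r := by exact_mod_cast hr.1
    have h2 : (r:ℤ) < k := by
      have := hr.2; omega
    have : c' * (c * r) = r + k * (m * r) := by linear_combination (r:ℤ) * hcc
    rw [hcancel, this, Int.add_mul_emod_self_left, Int.emod_eq_of_lt (by omega) h2]
    omega
  have hmem : ∀ c c' : ℤ, c * c' - 1 = k * m → ∀ r ∈ Finset.Ico 1 k.toNat,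
      ((c * r) % k).toNat ∈ Finset.Ico 1 k.toNat := by
    intro c c' hcc r hr
    simp only [Finset.mem_Ico] at hr ⊢
    have h1 : (1:ℤ) ≤ r := by exact_mod_cast hr.1
    have h2 : (r:ℤ) < k := by have := hr.2; omega
    have hlt : (c * r) % k < k := Int.emod_lt_of_pos _ hk
    have hge : 0 ≤ (c * r) % k := Int.emod_nonneg _ (by omega)
    have hne : (c * r) % k ≠ 0 := by
      intro h0
      have hdvd : k ∣ c * r := Int.dvd_of_emod_eq_zero h0
      have : k ∣ (r:ℤ) := by
        have : c' * (c * r) = r + k * (m * r) := by linear_combination (r:ℤ) * hcc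
        obtain ⟨t, ht⟩ := hdvd
        exact ⟨c' * t - m * r, by linear_combination c' * ht - this⟩
      have := Int.le_of_dvd (by omega) this
      omega
    omega
  have hac : a * h - 1 = k * m := by linear_combination hm
  refine Finset.sum_nbij' (i := fun r => (h * r % k).toNat) (j := fun r => (a * r % k).toNat)
    (hmem h a hm) (hmem a h hac) ?_ ?_ ?_
  · intro r hr
    rw [Int.toNat_of_nonneg (Int.emod_nonneg _ (by omega))]
    exact hinv h a hm r hr
  · intro r hr
    rw [Int.toNat_of_nonneg (Int.emod_nonneg _ (by omega))]
    exact hinv a h hac r hr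
  · intro r hr
    rw [Int.toNat_of_nonneg (Int.emod_nonneg (h * r) (by omega))]

lemma six_sum_sq (n : ℕ) : 6 * ∑ r ∈ Finset.range n, (r:ℤ)^2 = (n-1)*n*(2*n-1) := by
  induction n with
  | zero => simp
  | succ n ih =>
    rw [Finset.sum_range_succ, mul_add, ih]
    push_cast
    ring

lemma six_sum_sq' (n : ℕ) : 6 * ∑ r ∈ Finset.Ico 1 n, (r:ℤ)^2 = (n-1)*n*(2*n-1) := by
  rw [← six_sum_sq n]
  congr 1
  rcases le_or_gt 1 n with h | h
  · rw [Finset.range_eq_Ico, ← Finset.sum_Ico_consecutive _ (Nat.zero_le 1) h]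
    simp
  · interval_cases n
    simp

/-- The key congruence: if `h a ≡ 1 (mod k)` then
`12 ∑ r (h r mod k) ≡ k (h + a) (mod k²)`. -/
lemma key_cong (h a k : ℤ) (hk : 0 < k) (hd : k ∣ h * a - 1) :
    k^2 ∣ 12 * (∑ r ∈ Finset.Ico 1 k.toNat, (r:ℤ) * (h * r % k)) - k * (h + a) := by
  obtain ⟨m, hm⟩ := hd
  set n := k.toNat with hn
  have hnk : (n:ℤ) = k := Int.toNat_of_nonneg (by omega)
  set X := ∑ r ∈ Finset.Ico 1 n, (r:ℤ) * (h * r % k) with hX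
  set S2 := ∑ r ∈ Finset.Ico 1 n, (r:ℤ)^2 with hS2
  set W := ∑ r ∈ Finset.Ico 1 n, (h * r - h * r % k)^2 with hW
  have hWdvd : k^2 ∣ W := by
    apply Finset.dvd_sum
    intro r _
    have : h * r - h * r % k = k * (h * r / k) := by
      have := Int.emod_add_mul_ediv (h * (r:ℤ)) k
      linarith
    rw [this, mul_pow]
    exact Dvd.intro _ rfl
  have hperm := perm_sum h a k hk ⟨m, hm⟩
  have hexpand : W = (h^2 + 1) * S2 - 2 * h * X := by
    have : ∀ r ∈ Finset.Ico 1 n, (h * (r:ℤ) - h * r % k)^2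
        = h^2 * (r:ℤ)^2 - 2 * h * ((r:ℤ) * (h * r % k)) + (h * r % k)^2 := by
      intro r _; ring
    rw [hW, Finset.sum_congr rfl this, Finset.sum_add_distrib, Finset.sum_sub_distrib,
      ← Finset.mul_sum, ← Finset.mul_sum, hperm, ← hS2, ← hX]
    ring
  have h6 : 6 * S2 = (k-1)*k*(2*k-1) := by
    have := six_sum_sq' n
    rw [hnk] at this
    rw [hS2, this]
  have final : h * (12 * X - k * (h + a)) = k^2 * ((h^2+1)*(2*k-3) - m) - 6 * W := by
    linear_combination 6 * hexpand + (h^2+1) * h6 + (-k) * hm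
  have hdvd : k^2 ∣ h * (12 * X - k * (h + a)) := by
    rw [final]
    exact dvd_sub (Dvd.intro _ rfl) ((hWdvd).mul_left 6)
  have hco : IsCoprime h k := ⟨a, -m, by linear_combination hm⟩
  exact ((hco.symm.pow_left).dvd_of_dvd_mul_left hdvd)

lemma two_sum (n : ℕ) : 2 * ∑ r ∈ Finset.Ico 1 n, (r:ℤ) = n*(n-1) := by
  induction n with
  | zero => simp
  | succ n ih =>
    rcases Nat.eq_zero_or_pos n with h | h
    · subst h; simp
    · rw [Finset.sum_Ico_succ_top (by omega), mul_add, ih]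
      push_cast
      ring

lemma twelve_dedekind (h k : ℤ) (hk : 0 < k) :
    12 * dedekindSum h k
      = ((12 * ∑ r ∈ Finset.Ico 1 k.toNat, (r:ℤ) * (h * r % k) : ℤ) : ℚ) / (k:ℚ)^2
        - 3*((k:ℚ)-1) := by
  have hnk : ((k.toNat : ℕ) : ℤ) = k := Int.toNat_of_nonneg (by omega)
  have hk0 : (k:ℚ) ≠ 0 := by positivity
  have hterm : ∀ r ∈ Finset.Ico 1 k.toNat,
      (r : ℚ) / k * ((h * r : ℚ) / k - ⌊(h * r : ℚ) / k⌋ - 1 / 2)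
        = (((r:ℤ) * (h * r % k) : ℤ) : ℚ) / (k:ℚ)^2 - (r:ℚ) / (2*k) := by
    intro r _
    have hfl : ⌊(h * r : ℚ) / k⌋ = (h * (r:ℤ)) / k := by
      have hkq : ((k.toNat : ℕ) : ℚ) = (k:ℚ) := by exact_mod_cast hnk
      have : ((h:ℚ) * r) / k = ((h * (r:ℤ) : ℤ) : ℚ) / ((k.toNat : ℕ) : ℚ) := by
        rw [hkq]; push_cast; ring
      rw [this, Rat.floor_intCast_div_natCast, hnk]
    have hdm : h * (r:ℤ) % k + k * (h * (r:ℤ) / k) = h * (r:ℤ) := Int.emod_add_mul_ediv _ _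
    have hdmq : ((h * (r:ℤ) % k : ℤ) : ℚ) + (k:ℚ) * ((h * (r:ℤ) / k : ℤ) : ℚ) = (h:ℚ) * r := by
      exact_mod_cast congrArg (fun z : ℤ => (z : ℚ)) hdm
    rw [hfl]
    have hsub : (h:ℚ) * r / k - ((h * (r:ℤ) / k : ℤ) : ℚ) = ((h * (r:ℤ) % k : ℤ) : ℚ) / k := by
      field_simp
      linear_combination -hdmq
    rw [hsub]
    push_cast
    field_simp
  rw [dedekindSum, Finset.sum_congr rfl hterm, Finset.sum_sub_distrib, ← Finset.sum_div,
    ← Finset.sum_div]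
  have hs1 : ∑ r ∈ Finset.Ico 1 k.toNat, (((r:ℤ) * (h * r % k) : ℤ) : ℚ)
      = ((∑ r ∈ Finset.Ico 1 k.toNat, (r:ℤ) * (h * r % k) : ℤ) : ℚ) := by
    push_cast; rfl
  have hs2 : ∑ r ∈ Finset.Ico 1 k.toNat, (r:ℚ)
      = ((∑ r ∈ Finset.Ico 1 k.toNat, (r:ℤ) : ℤ) : ℚ) := by
    push_cast; rfl
  have h2 := two_sum k.toNat
  rw [hnk] at h2
  have h2q : 2 * ((∑ r ∈ Finset.Ico 1 k.toNat, (r:ℤ) : ℤ) : ℚ) = (k:ℚ) * ((k:ℚ)-1) := by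
    exact_mod_cast congrArg (fun z : ℤ => (z : ℚ)) h2
  rw [hs1, hs2]
  push_cast
  field_simp
  push_cast at h2q
  linear_combination (-6*(k:ℚ)) * h2q

theorem Psi_isInt (γ : SL(2, ℤ)) : ∃ m : ℤ, PsiM ↑γ = (m : ℚ) := by
  set M : Matrix (Fin 2) (Fin 2) ℤ := ↑γ with hM
  have hdet : M.det = 1 := γ.2
  rw [Matrix.det_fin_two] at hdet
  rcases lt_trichotomy (M 1 0) 0 with hc | hc | hc
  · -- c < 0
    set k := -(M 1 0) with hk'
    have hk : 0 < k := by omega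
    have hdvd : k ∣ M 1 1 * M 0 0 - 1 := ⟨-(M 0 1), by linear_combination hdet⟩
    obtain ⟨t, ht⟩ := key_cong (M 1 1) (M 0 0) k hk hdvd
    refine ⟨t - 3*k + 6, ?_⟩
    rw [PsiM, if_neg (by omega), if_pos hc, twelve_dedekind (M 1 1) k hk]
    have htq : ((12 * ∑ r ∈ Finset.Ico 1 k.toNat, (r:ℤ) * (M 1 1 * r % k) : ℤ) : ℚ)
        - (k:ℚ) * ((M 1 1 : ℚ) + (M 0 0 : ℚ)) = (k:ℚ)^2 * t := by
      exact_mod_cast congrArg (fun z:ℤ => (z:ℚ)) ht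
    have hkq : ((k:ℤ):ℚ) ≠ 0 := by exact_mod_cast (by omega : k ≠ 0)
    have hcq : ((M 1 0 : ℤ):ℚ) = -((k:ℤ):ℚ) := by push_cast [hk']; ring
    rw [hcq, div_neg]
    push_cast
    field_simp
    push_cast at htq
    linear_combination htq
  · -- c = 0
    have had : M 0 0 * M 1 1 = 1 := by
      have : (M 0 1) * (M 1 0) = 0 := by rw [hc]; ring
      linear_combination hdet + this
    rcases (Int.mul_eq_one_iff_eq_one_or_neg_one.mp had) with ⟨h1, h2⟩ | ⟨h1, h2⟩
    · refine ⟨M 0 1, ?_⟩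
      rw [PsiM, if_neg (by omega), if_neg (by omega), if_pos (by omega)]
    · refine ⟨-(M 0 1) - 6, ?_⟩
      rw [PsiM, if_neg (by omega), if_neg (by omega), if_neg (by omega)]
      push_cast
      ring
  · -- c > 0
    have hdvd : M 1 0 ∣ (-(M 1 1)) * (-(M 0 0)) - 1 := ⟨M 0 1, by linear_combination hdet⟩
    obtain ⟨t, ht⟩ := key_cong (-(M 1 1)) (-(M 0 0)) (M 1 0) hc hdvd
    refine ⟨t - 3*(M 1 0), ?_⟩
    rw [PsiM, if_pos hc, twelve_dedekind (-(M 1 1)) (M 1 0) hc]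
    have htq : ((12 * ∑ r ∈ Finset.Ico 1 (M 1 0).toNat, (r:ℤ) * (-(M 1 1) * r % (M 1 0)) : ℤ) : ℚ)
        - ((M 1 0 : ℤ):ℚ) * ((-(M 1 1) : ℤ):ℚ) + ((M 1 0 : ℤ):ℚ) * ((M 0 0 : ℤ):ℚ)
        = ((M 1 0 : ℤ):ℚ)^2 * t := by
      have := congrArg (fun z:ℤ => (z:ℚ)) ht
      push_cast at this ⊢
      linear_combination this
    have hkq : ((M 1 0 : ℤ):ℚ) ≠ 0 := by exact_mod_cast (by omega : M 1 0 ≠ 0)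
    push_cast
    field_simp
    push_cast at htq
    simp only [neg_mul] at htq ⊢
    linear_combination htq
end

section
/- Let G be a group, g an element of order n in the center of G, F the free group on a set X, and f : F → G/⟨g⟩ a surjective homomorphism whose kernel is the normal closure of a subset R ⊆ ker f. Let F' be the free group on X ∪ {x_g} (x_g a new letter) and τ : F' → G a homomorphism with τ(x) ∈ f(x) for x ∈ X and τ(x_g) = g. Set R' = {r·x_g^{-i} : r ∈ R, τ(r) = g^i, 0 ≤ i < n} and R'' = {x_g x x_g⁻¹ x⁻¹ : x ∈ X}. Then τ is surjective and ker τ equals the normal closure of R' ∪ R'' ∪ {x_gⁿ} in F'. -/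
open Matrix MatrixGroups

theorem central_extension_presentation {G : Type*} [Group G] (g : G)
    (hg : g ∈ Subgroup.center G) [(Subgroup.zpowers g).Normal]
    (n : ℕ) (hn : 1 ≤ n) (hord : orderOf g = n)
    {X : Type*} (f : FreeGroup X →* G ⧸ Subgroup.zpowers g)
    (hf : Function.Surjective f)
    (R : Set (FreeGroup X)) (hR : Subgroup.normalClosure R = f.ker)
    (τ : FreeGroup (X ⊕ Unit) →* G)
    (hτ1 : ∀ x : X, (τ (FreeGroup.of (Sum.inl x)) : G ⧸ Subgroup.zpowers g) = f (FreeGroup.of x))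
    (hτ2 : τ (FreeGroup.of (Sum.inr ())) = g) :
    Function.Surjective τ ∧
      Subgroup.normalClosure
        ({w | ∃ r ∈ R, ∃ i : ℕ, i < n ∧ τ (FreeGroup.map Sum.inl r) = g ^ i ∧
            w = FreeGroup.map Sum.inl r * (FreeGroup.of (Sum.inr (): X ⊕ Unit))⁻¹ ^ i} ∪
          {w | ∃ x : X, w = FreeGroup.of (Sum.inr ()) * FreeGroup.of (Sum.inl x) *
            (FreeGroup.of (Sum.inr (): X ⊕ Unit))⁻¹ * (FreeGroup.of (Sum.inl x : X ⊕ Unit))⁻¹} ∪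
          {FreeGroup.of (Sum.inr ()) ^ n}) = τ.ker := by
  classical
  set xg : FreeGroup (X ⊕ Unit) := FreeGroup.of (Sum.inr ()) with hxg
  set S : Set (FreeGroup (X ⊕ Unit)) :=
      ({w | ∃ r ∈ R, ∃ i : ℕ, i < n ∧ τ (FreeGroup.map Sum.inl r) = g ^ i ∧
            w = FreeGroup.map Sum.inl r * (FreeGroup.of (Sum.inr (): X ⊕ Unit))⁻¹ ^ i} ∪
          {w | ∃ x : X, w = FreeGroup.of (Sum.inr ()) * FreeGroup.of (Sum.inl x) *
            (FreeGroup.of (Sum.inr (): X ⊕ Unit))⁻¹ * (FreeGroup.of (Sum.inl x : X ⊕ Unit))⁻¹} ∪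
          {FreeGroup.of (Sum.inr ()) ^ n}) with hS
  set N := Subgroup.normalClosure S with hN
  -- the retraction ρ : F' → F
  set ρ : FreeGroup (X ⊕ Unit) →* FreeGroup X :=
    FreeGroup.lift (Sum.elim FreeGroup.of (fun _ => 1)) with hρ
  -- the projection
  set π : G →* G ⧸ Subgroup.zpowers g := QuotientGroup.mk' (Subgroup.zpowers g) with hπ
  have key : ∀ w : FreeGroup (X ⊕ Unit), π (τ w) = f (ρ w) := by
    have : π.comp τ = f.comp ρ := by
      apply FreeGroup.ext_hom
      rintro (x | u)
      · simp only [MonoidHom.comp_apply, hπ, QuotientGroup.mk'_apply, hρ, FreeGroup.lift_apply_of,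
          Sum.elim_inl]
        exact hτ1 x
      · cases u
        simp only [MonoidHom.comp_apply, hπ, QuotientGroup.mk'_apply, hρ, FreeGroup.lift_apply_of,
          Sum.elim_inr, _root_.map_one, show τ (FreeGroup.of (Sum.inr ())) = g from hτ2]
        exact (QuotientGroup.eq_one_iff g).mpr (Subgroup.mem_zpowers g)
    intro w; exact DFunLike.congr_fun this w
  have hρinl : ∀ r : FreeGroup X, ρ (FreeGroup.map Sum.inl r) = r := by
    have : ρ.comp (FreeGroup.map Sum.inl) = MonoidHom.id _ := by
      apply FreeGroup.ext_hom; intro x; simp [hρ]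
    intro r; exact DFunLike.congr_fun this r
  have hgn : g ^ n = 1 := by rw [← hord]; exact pow_orderOf_eq_one g
  -- surjectivity
  have hsurj : Function.Surjective τ := by
    intro a
    obtain ⟨w, hw⟩ := hf (↑a : G ⧸ Subgroup.zpowers g)
    have h1 : π (τ (FreeGroup.map Sum.inl w)) = ↑a := by rw [key, hρinl, hw]
    have h2 : (τ (FreeGroup.map Sum.inl w))⁻¹ * a ∈ Subgroup.zpowers g := by
      rwa [← QuotientGroup.eq, ← QuotientGroup.mk'_apply, ← QuotientGroup.mk'_apply, ← hπ]
    obtain ⟨k, hk⟩ := h2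
    have hk' : g ^ k = (τ (FreeGroup.map Sum.inl w))⁻¹ * a := hk
    exact ⟨FreeGroup.map Sum.inl w * xg ^ k, by
      rw [_root_.map_mul, _root_.map_zpow, hxg, hτ2, hk']; group⟩
  refine ⟨hsurj, ?_⟩
  -- R ⊆ ker f
  have hRker : R ⊆ (f.ker : Set (FreeGroup X)) := hR ▸ Subgroup.subset_normalClosure
  -- N ≤ ker τ
  have hNle : N ≤ τ.ker := by
    apply Subgroup.normalClosure_le_normal
    rintro w ((⟨r, hrR, i, hi, hτr, rfl⟩ | ⟨x, rfl⟩) | hw)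
    · simp only [SetLike.mem_coe, MonoidHom.mem_ker, _root_.map_mul, _root_.map_pow, _root_.map_inv, ← hxg, hτ2, hτr]
      group
    · simp only [SetLike.mem_coe, MonoidHom.mem_ker, _root_.map_mul, _root_.map_inv, ← hxg, hτ2]
      have := (Subgroup.mem_center_iff.mp hg) (τ (FreeGroup.of (Sum.inl x)))
      rw [← this]; group
    · simp only [Set.mem_singleton_iff] at hw
      subst hw
      simp only [SetLike.mem_coe, MonoidHom.mem_ker, _root_.map_pow, ← hxg, hτ2, hgn]
  -- work in the quotient Q = F' / N
  set φ : FreeGroup (X ⊕ Unit) →* FreeGroup (X ⊕ Unit) ⧸ N := QuotientGroup.mk' N with hφ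
  set c : FreeGroup (X ⊕ Unit) ⧸ N := φ xg with hc
  -- c commutes with everything
  have hpure : ∀ s : X ⊕ Unit, (pure s : FreeGroup (X ⊕ Unit)) = FreeGroup.of s :=
    fun _ => rfl
  have hcomm : ∀ u : FreeGroup (X ⊕ Unit), φ u * c = c * φ u := by
    have base : ∀ s : X ⊕ Unit, φ (FreeGroup.of s) * c = c * φ (FreeGroup.of s) := by
      rintro (x | ⟨⟩)
      · have hmem : xg * FreeGroup.of (Sum.inl x) * xg⁻¹ * (FreeGroup.of (Sum.inl x))⁻¹ ∈ N :=
          Subgroup.subset_normalClosure (Or.inl (Or.inr ⟨x, rfl⟩))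
        have h1 : φ (xg * FreeGroup.of (Sum.inl x) * xg⁻¹ * (FreeGroup.of (Sum.inl x))⁻¹) = 1 :=
          (QuotientGroup.eq_one_iff _).mpr hmem
        simp only [_root_.map_mul, _root_.map_inv] at h1
        have h2 : φ xg * φ (FreeGroup.of (Sum.inl x)) * (φ xg)⁻¹ = φ (FreeGroup.of (Sum.inl x)) :=
          mul_inv_eq_one.mp h1
        have h3 := mul_inv_eq_iff_eq_mul.mp h2
        rw [hc]; exact h3.symm
      · rfl
    intro u
    induction u using FreeGroup.induction_on with
    | C1 => simp
    | of s => exact base s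
    | inv_of s ih =>
      rw [_root_.map_inv]
      exact (Commute.inv_left ih).eq
    | mul u v ihu ihv =>
      rw [_root_.map_mul, mul_assoc, ihv, ← mul_assoc, ihu, mul_assoc]
  have hcomm' : ∀ (q : FreeGroup (X ⊕ Unit) ⧸ N), q * c = c * q := by
    intro q
    obtain ⟨u, rfl⟩ := QuotientGroup.mk'_surjective N q
    exact hcomm u
  have hzc : ∀ (q : FreeGroup (X ⊕ Unit) ⧸ N) (k : ℤ), c ^ k * q = q * c ^ k := by
    intro q k
    have h : Commute c q := (hcomm' q).symm
    exact (h.zpow_left k).eq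
  -- φ w = φ (map inl (ρ w)) * c ^ k for some k
  have hB : ∀ w : FreeGroup (X ⊕ Unit), ∃ k : ℤ,
      φ w = φ (FreeGroup.map Sum.inl (ρ w)) * c ^ k := by
    intro w
    induction w using FreeGroup.induction_on with
    | C1 => exact ⟨0, by simp⟩
    | of s =>
      rcases s with x | u
      · exact ⟨0, by rw [hρ]; simp [FreeGroup.lift_apply_of]⟩
      · cases u
        exact ⟨1, by rw [hρ]; simp [FreeGroup.lift_apply_of, hc, hxg]⟩
    | inv_of s _ =>
      rcases s with x | u
      · refine ⟨0, ?_⟩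
        rw [hρ]
        simp only [_root_.map_inv, FreeGroup.lift_apply_of, Sum.elim_inl, zpow_zero, mul_one,
          FreeGroup.map.of]
      · cases u
        refine ⟨-1, ?_⟩
        rw [hρ]
        simp only [_root_.map_inv, FreeGroup.lift_apply_of, Sum.elim_inr, inv_one, _root_.map_one, one_mul, hc, hxg,
          _root_.zpow_neg, zpow_one]
    | mul u v ihu ihv =>
      obtain ⟨k1, hk1⟩ := ihu
      obtain ⟨k2, hk2⟩ := ihv
      refine ⟨k1 + k2, ?_⟩
      rw [_root_.map_mul, hk1, hk2, _root_.map_mul, _root_.map_mul, mul_assoc, ← mul_assoc (c ^ k1),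
        hzc (φ ((FreeGroup.map Sum.inl) (ρ v))) k1, mul_assoc, ← _root_.zpow_add, ← mul_assoc,
        ← _root_.map_mul φ]
  -- zpowers c is normal since c is central
  haveI hcnorm : (Subgroup.zpowers c).Normal := by
    constructor
    intro a ha b
    obtain ⟨k, hk⟩ := ha
    have hk' : c ^ k = a := hk
    have : b * a * b⁻¹ = a := by
      rw [← hk', ← hzc b k, mul_assoc, mul_inv_cancel, mul_one]
    rw [this]
    exact ⟨k, hk⟩
  set θ : FreeGroup X →* FreeGroup (X ⊕ Unit) ⧸ N := φ.comp (FreeGroup.map Sum.inl) with hθ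
  set H : Subgroup (FreeGroup X) := Subgroup.comap θ (Subgroup.zpowers c) with hH
  haveI hHnorm : H.Normal := Subgroup.Normal.comap hcnorm θ
  have hRH : R ⊆ (H : Set (FreeGroup X)) := by
    intro r0 hr0
    have hfr0 : f r0 = 1 := hRker hr0
    have h1 : π (τ (FreeGroup.map Sum.inl r0)) = 1 := by
      rw [key, hρinl, hfr0]
    have h2 : τ (FreeGroup.map Sum.inl r0) ∈ Subgroup.zpowers g := by
      rw [hπ, QuotientGroup.mk'_apply] at h1
      exact (QuotientGroup.eq_one_iff _).mp h1
    obtain ⟨m, hm⟩ := h2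
    have hm' : g ^ m = τ (FreeGroup.map Sum.inl r0) := hm
    have hnpos : (0 : ℤ) < (n : ℤ) := by exact_mod_cast hn
    set i : ℕ := (m % (n : ℤ)).toNat with hi
    have hilt : i < n := by
      have h3 : m % (n : ℤ) < (n : ℤ) := Int.emod_lt_of_pos m hnpos
      omega
    have hgi : g ^ i = τ (FreeGroup.map Sum.inl r0) := by
      have h4 : (0 : ℤ) ≤ m % (n : ℤ) := Int.emod_nonneg m (by omega)
      have h5 : g ^ (i : ℤ) = g ^ (m % (n : ℤ)) := by
        rw [hi, Int.toNat_of_nonneg h4]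
      have h6 : g ^ (m % (n : ℤ)) = g ^ m := by
        rw [← hord]; exact zpow_mod_orderOf g m
      rw [← _root_.zpow_natCast, h5, h6, hm']
    have hmemS : FreeGroup.map Sum.inl r0 * (FreeGroup.of (Sum.inr (): X ⊕ Unit))⁻¹ ^ i ∈ S :=
      Or.inl (Or.inl ⟨r0, hr0, i, hilt, hgi.symm, rfl⟩)
    have hmemN : FreeGroup.map Sum.inl r0 * (FreeGroup.of (Sum.inr (): X ⊕ Unit))⁻¹ ^ i ∈ N :=
      Subgroup.subset_normalClosure hmemS
    have h7 : φ (FreeGroup.map Sum.inl r0 * (FreeGroup.of (Sum.inr (): X ⊕ Unit))⁻¹ ^ i) = 1 :=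
      (QuotientGroup.eq_one_iff _).mpr hmemN
    simp only [_root_.map_mul, _root_.map_pow, _root_.map_inv] at h7
    have h8 : θ r0 = c ^ (i : ℤ) := by
      have h9 := mul_eq_one_iff_eq_inv.mp h7
      rw [hθ, MonoidHom.comp_apply, h9, hc, hxg]
      rw [← inv_pow, inv_inv, _root_.zpow_natCast]
    exact ⟨(i : ℤ), h8.symm⟩
  have hCR : ∀ r ∈ f.ker, θ r ∈ Subgroup.zpowers c := by
    intro r hr
    rw [← hR] at hr
    exact Subgroup.normalClosure_le_normal hRH hr
  -- conclusion
  refine le_antisymm hNle ?_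
  intro w hw
  have hτw : τ w = 1 := hw
  have hfρw : f (ρ w) = 1 := by
    rw [← key, hτw, _root_.map_one]
  obtain ⟨m, hm⟩ := hCR (ρ w) hfρw
  have hm' : c ^ m = θ (ρ w) := hm
  obtain ⟨k, hk⟩ := hB w
  have hm'' : φ (FreeGroup.map Sum.inl (ρ w)) = c ^ m := hm'.symm
  have hφw : φ w = c ^ (m + k) := by
    rw [hk, hm'', ← _root_.zpow_add]
  have hφxg : φ (xg ^ (m + k)) = c ^ (m + k) := by rw [_root_.map_zpow, hc]
  have hwN : w⁻¹ * xg ^ (m + k) ∈ N := by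
    have : (w : FreeGroup (X ⊕ Unit) ⧸ N) = (xg ^ (m + k) : FreeGroup (X ⊕ Unit)) := by
      show φ w = φ (xg ^ (m + k))
      rw [hφw, hφxg]
    exact QuotientGroup.eq.mp this
  have hτeq : τ (w⁻¹ * xg ^ (m + k)) = 1 := hNle hwN
  have hg1 : g ^ (m + k) = 1 := by
    rw [_root_.map_mul, _root_.map_inv, _root_.map_zpow, hτw, hτ2, inv_one, one_mul] at hτeq
    exact hτeq
  have hdvd : ((n : ℕ) : ℤ) ∣ (m + k) := by
    rw [← hord]
    exact orderOf_dvd_iff_zpow_eq_one.mpr hg1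
  obtain ⟨t, ht⟩ := hdvd
  have hxgN : xg ^ (m + k) ∈ N := by
    have hxgnN : xg ^ n ∈ N := Subgroup.subset_normalClosure (Or.inr rfl)
    have : xg ^ (m + k) = (xg ^ n) ^ t := by
      rw [ht, ← _root_.zpow_natCast xg n, ← _root_.zpow_mul]
    rw [this]
    exact Subgroup.zpow_mem N hxgnN t
  have : w⁻¹ ∈ N := by
    have := mul_mem hwN (inv_mem hxgN)
    rwa [mul_assoc, mul_inv_cancel, mul_one] at this
  simpa using inv_mem this
end

section
/- If c and d are coprime integers with c > 0 and d² + d + 1 ≡ 0 (mod c), then the Dedekind sum satisfies s(d,c) = (c-1)/(12c). -/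
open Matrix MatrixGroups

namespace DedekindAux

lemma sum_Ico_int_eq (c : ℤ) (H : ℤ → ℚ) :
    ∑ r ∈ Finset.Ico (1:ℤ) c, H r = ∑ r ∈ Finset.Ico 1 c.toNat, H r := by
  apply Finset.sum_nbij' (i := Int.toNat) (j := (Nat.cast : ℕ → ℤ))
  · intro a ha; simp only [Finset.mem_Ico] at *; omega
  · intro a ha; simp only [Finset.mem_Ico] at *; omega
  · intro a ha; simp only [Finset.mem_Ico] at ha; omega
  · intro a ha; simp only [Finset.mem_Ico] at ha; omega
  · intro a ha; simp only [Finset.mem_Ico] at ha; congr 1; omega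

lemma sum_Ico_int_eq' (c : ℤ) (H : ℤ → ℚ) (h0 : H 0 = 0) :
    ∑ r ∈ Finset.Ico (1:ℤ) c, H r = ∑ r ∈ Finset.range c.toNat, H r := by
  rw [sum_Ico_int_eq]
  have h : Finset.Ico 1 c.toNat = (Finset.range c.toNat).erase 0 := by
    ext x; simp [Finset.mem_Ico]; omega
  rw [h, Finset.sum_erase _ (by simpa using h0)]

lemma sum_range_cast (n : ℕ) : ∑ r ∈ Finset.range n, (r:ℚ) = n*(n-1)/2 := by
  induction n with
  | zero => simp
  | succ n ih => rw [Finset.sum_range_succ, ih]; push_cast; ring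

lemma sum_range_sq_cast (n : ℕ) : ∑ r ∈ Finset.range n, (r:ℚ)^2 = n*(n-1)*(2*n-1)/6 := by
  induction n with
  | zero => simp
  | succ n ih => rw [Finset.sum_range_succ, ih]; push_cast; ring

section main
variable {c d : ℤ}

lemma S1 (hc : 0 < c) : ∑ r ∈ Finset.Ico (1:ℤ) c, (r:ℚ) = (c*(c-1))/2 := by
  rw [sum_Ico_int_eq' c (fun x => (x:ℚ)) (by simp)]
  have h := sum_range_cast c.toNat
  have hn : ((c.toNat : ℕ) : ℚ) = (c : ℚ) := by
    rw [← Int.cast_natCast, Int.toNat_of_nonneg hc.le]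
  simp only [Int.cast_natCast] at *
  rw [h, hn]

lemma S2 (hc : 0 < c) : ∑ r ∈ Finset.Ico (1:ℤ) c, (r:ℚ)^2 = (c*(c-1)*(2*c-1))/6 := by
  rw [sum_Ico_int_eq' c (fun x => (x:ℚ)^2) (by simp)]
  have h := sum_range_sq_cast c.toNat
  have hn : ((c.toNat : ℕ) : ℚ) = (c : ℚ) := by
    rw [← Int.cast_natCast, Int.toNat_of_nonneg hc.le]
  simp only [Int.cast_natCast] at *
  rw [h, hn]

lemma Scard (hc : 0 < c) : ∑ _r ∈ Finset.Ico (1:ℤ) c, (1:ℚ) = (c:ℚ) - 1 := by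
  rw [Finset.sum_const, Int.card_Ico, nsmul_eq_mul, mul_one]
  have : ((c - 1).toNat : ℤ) = c - 1 := Int.toNat_of_nonneg (by omega)
  rw [← Int.cast_natCast, this]; push_cast; ring

lemma f_mem (hc : 0 < c) (hcop : IsCoprime d c) {r : ℤ}
    (hr : r ∈ Finset.Ico (1:ℤ) c) : d * r % c ∈ Finset.Ico (1:ℤ) c := by
  simp only [Finset.mem_Ico] at *
  have h1 : 0 ≤ d * r % c := Int.emod_nonneg _ hc.ne'
  have h2 : d * r % c < c := Int.emod_lt_of_pos _ hc
  refine ⟨?_, h2⟩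
  rcases eq_or_lt_of_le h1 with h | h
  · exfalso
    have hdvd : c ∣ d * r := Int.dvd_of_emod_eq_zero h.symm
    have : c ∣ r := (hcop.symm).dvd_of_dvd_mul_left hdvd
    have := Int.le_of_dvd (by omega) this
    omega
  · omega

lemma emod_f (x : ℤ) : d * (x % c) % c = d * x % c := by
  conv_lhs => rw [Int.mul_emod, Int.emod_emod_of_dvd _ dvd_rfl, ← Int.mul_emod]

lemma f_cubed (hdvd : c ∣ d ^ 2 + d + 1) {r : ℤ}
    (hr : r ∈ Finset.Ico (1:ℤ) c) : d * (d * (d * r % c) % c) % c = r := by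
  simp only [Finset.mem_Ico] at hr
  rw [emod_f (d * r), emod_f (d * (d * r))]
  have h3 : c ∣ d ^ 3 - 1 := by
    have h : d ^ 3 - 1 = (d - 1) * (d ^ 2 + d + 1) := by ring
    rw [h]; exact Dvd.dvd.mul_left hdvd _
  have h5 : c ∣ r - d * (d * (d * r)) := by
    have h : r - d * (d * (d * r)) = -((d ^ 3 - 1) * r) := by ring
    rw [h]; exact (h3.mul_right r).neg_right
  have hmod : d * (d * (d * r)) ≡ r [ZMOD c] := Int.ModEq.symm (Int.modEq_iff_dvd.mpr (by
    have h : d * (d * (d * r)) - r = -(r - d * (d * (d * r))) := by ring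
    rw [h]; exact h5.neg_right))
  calc d * (d * (d * r)) % c = r % c := hmod
    _ = r := Int.emod_eq_of_lt (by omega) (by omega)

lemma orbit_dvd (hdvd : c ∣ d ^ 2 + d + 1) (r : ℤ) :
    c ∣ r + d * r % c + d * (d * r % c) % c := by
  have key : ∀ x : ℤ, c ∣ x - x % c := fun x => ⟨x / c, by rw [Int.emod_def]; ring⟩
  obtain ⟨k1, hk1⟩ := key (d * r)
  obtain ⟨k2, hk2⟩ := key (d * (d * r % c))
  obtain ⟨k4, hk4⟩ : c ∣ d * (d * r) + d * r + r := by
    have h := hdvd.mul_right r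
    have he : (d ^ 2 + d + 1) * r = d * (d * r) + d * r + r := by ring
    rwa [he] at h
  refine ⟨k4 - k1 - d * k1 - k2, ?_⟩
  have : d * (d * r) - d * (d * r % c) = d * (c * k1) := by rw [← hk1]; ring
  linear_combination hk4 - hk1 - hk2 - this

lemma sum_comp_f (hc : 0 < c) (hcop : IsCoprime d c) (hdvd : c ∣ d ^ 2 + d + 1)
    (H : ℤ → ℚ) :
    ∑ r ∈ Finset.Ico (1:ℤ) c, H (d * r % c) = ∑ r ∈ Finset.Ico (1:ℤ) c, H r := by
  apply Finset.sum_nbij' (i := fun r => d * r % c) (j := fun r => d * (d * r % c) % c)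
  · intro a ha; exact f_mem hc hcop ha
  · intro a ha; exact f_mem hc hcop (f_mem hc hcop ha)
  · intro a ha; exact f_cubed hdvd ha
  · intro a ha; exact f_cubed hdvd ha
  · intro a ha; rfl

lemma fract_eq (hc : 0 < c) (x : ℤ) :
    (x:ℚ)/(c:ℚ) - ⌊(x:ℚ)/(c:ℚ)⌋ = ((x % c : ℤ) : ℚ)/(c:ℚ) := by
  have hcn : ((c.toNat : ℕ) : ℚ) = (c:ℚ) := by
    rw [← Int.cast_natCast, Int.toNat_of_nonneg hc.le]
  have hfl : ⌊(x:ℚ)/(c:ℚ)⌋ = x / c := by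
    rw [← hcn, Rat.floor_intCast_div_natCast, Int.toNat_of_nonneg hc.le]
  rw [hfl]
  have h : x % c = x - c * (x / c) := by rw [Int.emod_def]
  have hc0 : (c:ℚ) ≠ 0 := Int.cast_ne_zero.mpr hc.ne'
  rw [h]; push_cast; field_simp

lemma square_eq (hc : 0 < c) (hcop : IsCoprime d c) (hdvd : c ∣ d ^ 2 + d + 1)
    {r : ℤ} (hr : r ∈ Finset.Ico (1:ℤ) c) :
    (((r:ℚ)/(c:ℚ) - 1/2) + (((d*r%c : ℤ):ℚ)/(c:ℚ) - 1/2)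
      + (((d*(d*r%c)%c : ℤ):ℚ)/(c:ℚ) - 1/2))^2 = 1/4 := by
  have ha := f_mem hc hcop hr
  have hb := f_mem hc hcop ha
  obtain ⟨k, hk⟩ := orbit_dvd hdvd r
  simp only [Finset.mem_Ico] at hr ha hb
  have hk1 : 1 ≤ k := by nlinarith
  have hk2 : k ≤ 2 := by nlinarith
  have hc0 : (c:ℚ) ≠ 0 := Int.cast_ne_zero.mpr hc.ne'
  have hcast : ((r:ℚ) + ((d*r%c : ℤ):ℚ) + ((d*(d*r%c)%c : ℤ):ℚ)) = (c:ℚ) * (k:ℚ) := by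
    exact_mod_cast congrArg (Int.cast : ℤ → ℚ) hk
  have key : (((r:ℚ)/(c:ℚ) - 1/2) + (((d*r%c : ℤ):ℚ)/(c:ℚ) - 1/2)
      + (((d*(d*r%c)%c : ℤ):ℚ)/(c:ℚ) - 1/2)) = (k:ℚ) - 3/2 := by
    field_simp
    linarith [hcast]
  rw [key]
  interval_cases k <;> norm_num

lemma sum_g_zero (hc : 0 < c) :
    ∑ r ∈ Finset.Ico (1:ℤ) c, ((r:ℚ)/(c:ℚ) - 1/2) = 0 := by
  have hc0 : (c:ℚ) ≠ 0 := Int.cast_ne_zero.mpr hc.ne'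
  rw [Finset.sum_sub_distrib, ← Finset.sum_div, S1 hc]
  have h2 : ∑ _r ∈ Finset.Ico (1:ℤ) c, (1/2 : ℚ) = ((c:ℚ) - 1)/2 := by
    have := Scard hc
    rw [show (1/2 : ℚ) = 1 * (1/2) by norm_num]
    rw [← Finset.sum_mul, this]; ring
  rw [h2]; field_simp; ring

lemma sum_g_sq (hc : 0 < c) :
    ∑ r ∈ Finset.Ico (1:ℤ) c, ((r:ℚ)/(c:ℚ) - 1/2)^2
      = ((c:ℚ)-1)*((c:ℚ)-2)/(12*(c:ℚ)) := by
  have hc0 : (c:ℚ) ≠ 0 := Int.cast_ne_zero.mpr hc.ne'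
  have expand : ∀ r : ℤ, ((r:ℚ)/(c:ℚ) - 1/2)^2
      = (r:ℚ)^2 * (1/(c:ℚ)^2) - (r:ℚ) * (1/(c:ℚ)) + 1 * (1/4) := by
    intro r; field_simp; ring
  simp only [expand]
  rw [Finset.sum_add_distrib, Finset.sum_sub_distrib, ← Finset.sum_mul, ← Finset.sum_mul,
    ← Finset.sum_mul, S1 hc, S2 hc, Scard hc]
  field_simp; ring

lemma dedekind_as_int_sum (hc : 0 < c) (hcop : IsCoprime d c) (hdvd : c ∣ d ^ 2 + d + 1) :
    dedekindSum d c
      = ∑ r ∈ Finset.Ico (1:ℤ) c, ((r:ℚ)/(c:ℚ) - 1/2) * (((d*r%c : ℤ):ℚ)/(c:ℚ) - 1/2) := by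
  have hc0 : (c:ℚ) ≠ 0 := Int.cast_ne_zero.mpr hc.ne'
  have step1 : dedekindSum d c
      = ∑ r ∈ Finset.Ico (1:ℤ) c, (r:ℚ)/(c:ℚ) * (((d*r%c : ℤ):ℚ)/(c:ℚ) - 1/2) := by
    rw [dedekindSum, sum_Ico_int_eq c (fun x => (x:ℚ)/(c:ℚ) * (((d*x%c : ℤ):ℚ)/(c:ℚ) - 1/2))]
    apply Finset.sum_congr rfl
    intro r _
    have h := fract_eq hc (d * r)
    push_cast at h ⊢
    rw [show ((d:ℚ) * r / c - ⌊(d:ℚ) * r / c⌋ - 1/2)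
        = ((d:ℚ) * r / c - ⌊(d:ℚ) * r / c⌋) - 1/2 by ring, h]
  rw [step1]
  have split : ∀ r : ℤ, (r:ℚ)/(c:ℚ) * (((d*r%c : ℤ):ℚ)/(c:ℚ) - 1/2)
      = ((r:ℚ)/(c:ℚ) - 1/2) * (((d*r%c : ℤ):ℚ)/(c:ℚ) - 1/2)
        + (1/2) * (((d*r%c : ℤ):ℚ)/(c:ℚ) - 1/2) := by
    intro r; ring
  simp only [split]
  rw [Finset.sum_add_distrib, ← Finset.mul_sum,
    sum_comp_f hc hcop hdvd (fun x => (x:ℚ)/(c:ℚ) - 1/2), sum_g_zero hc]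
  ring

end main
end DedekindAux

open DedekindAux in
theorem dedekindSum_of_dvd_sq_add_self_add_one (c d : ℤ) (hc : 0 < c)
    (hcop : IsCoprime d c) (hdvd : c ∣ d ^ 2 + d + 1) :
    dedekindSum d c = ((c : ℚ) - 1) / (12 * c) := by
  have hc0 : (c:ℚ) ≠ 0 := Int.cast_ne_zero.mpr hc.ne'
  set s := Finset.Ico (1:ℤ) c with hs
  set g : ℤ → ℚ := fun x => (x:ℚ)/(c:ℚ) - 1/2 with hg
  set f : ℤ → ℤ := fun x => d * x % c with hf
  -- the key squared sum
  have hsq : ∑ r ∈ s, (g r + g (f r) + g (f (f r)))^2 = ((c:ℚ) - 1)/4 := by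
    have h1 : ∑ r ∈ s, (g r + g (f r) + g (f (f r)))^2 = ∑ _r ∈ s, (1/4 : ℚ) :=
      Finset.sum_congr rfl (fun r hr => square_eq hc hcop hdvd hr)
    rw [h1]
    have := Scard hc
    rw [show (1/4 : ℚ) = 1 * (1/4) by norm_num, ← Finset.sum_mul, this]; ring
  -- expansion
  set T : ℚ := ∑ r ∈ s, g r * g (f r) with hT
  have expand : ∑ r ∈ s, (g r + g (f r) + g (f (f r)))^2
      = 3 * (∑ r ∈ s, (g r)^2) + 6 * T := by
    have e1 : ∑ r ∈ s, (g (f r))^2 = ∑ r ∈ s, (g r)^2 :=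
      sum_comp_f hc hcop hdvd (fun x => (g x)^2)
    have e2 : ∑ r ∈ s, (g (f (f r)))^2 = ∑ r ∈ s, (g r)^2 := by
      rw [sum_comp_f hc hcop hdvd (fun x => (g (f x))^2)]; exact e1
    have e3 : ∑ r ∈ s, g (f r) * g (f (f r)) = T := by
      rw [hT]; exact sum_comp_f hc hcop hdvd (fun x => g x * g (f x))
    have e4 : ∑ r ∈ s, g r * g (f (f r)) = T := by
      rw [hT, ← sum_comp_f hc hcop hdvd (fun x => g x * g (f (f x)))]
      apply Finset.sum_congr rfl
      intro r hr
      have h3 : f (f (f r)) = r := f_cubed hdvd hr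
      show g (f r) * g (f (f (f r))) = g r * g (f r)
      rw [h3]; ring
    have hpt : ∀ r ∈ s, (g r + g (f r) + g (f (f r)))^2
        = (g r)^2 + (g (f r))^2 + (g (f (f r)))^2
          + 2 * (g r * g (f r)) + 2 * (g r * g (f (f r))) + 2 * (g (f r) * g (f (f r))) := by
      intro r _; ring
    rw [Finset.sum_congr rfl hpt]
    simp only [Finset.sum_add_distrib, ← Finset.mul_sum]
    rw [e1, e2, e3, e4, hT]
    ring
  have hT_eq : T = ((c:ℚ) - 1)/(12*(c:ℚ)) := by
    have h := hsq
    rw [expand, sum_g_sq hc] at h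
    field_simp at h ⊢
    linarith
  rw [dedekind_as_int_sum hc hcop hdvd, ← hs]
  calc (∑ r ∈ s, ((r:ℚ)/(c:ℚ) - 1/2) * (((d*r%c : ℤ):ℚ)/(c:ℚ) - 1/2)) = T := rfl
    _ = ((c:ℚ) - 1)/(12*(c:ℚ)) := hT_eq
end

section
/- Let N ∈ {2,3,4,5,7,9,13,25}, and let c, d be integers with N | c, gcd(c,d) = 1, c > 0. Let a be any integer with ad ≡ 1 (mod c). Then ((a+d)/c - 12s(d,c)) - ((a+d)/(c/N) - 12s(d,c/N)) is an integer divisible by N - 1. -/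
open Matrix MatrixGroups

lemma floor_cast_div (n d : ℤ) (hd : 0 < d) : ⌊((n:ℚ))/(d:ℚ)⌋ = n / d := by
  have h := Rat.floor_intCast_div_natCast n d.toNat
  simp only [← Int.cast_natCast (R := ℚ)] at h
  rwa [Int.toNat_of_nonneg hd.le] at h

lemma sum_Ico_one {M : Type*} [AddCommMonoid M] (f : ℕ → M) (hf : f 0 = 0) (m : ℕ) :
    ∑ r ∈ Finset.Ico 1 m, f r = ∑ r ∈ Finset.range m, f r := by
  rcases Nat.eq_zero_or_pos m with h | h
  · subst h; simp
  · rw [Finset.range_eq_Ico, Finset.sum_eq_sum_Ico_succ_bot h, hf, zero_add]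

lemma sum_range_id_int (m : ℕ) : 2 * ∑ r ∈ Finset.range m, (r:ℤ) = m * (m - 1) := by
  induction m with
  | zero => simp
  | succ k ih => rw [Finset.sum_range_succ, mul_add]; push_cast; push_cast at ih; rw [ih]; ring

lemma sum_range_sq_int (m : ℕ) : 6 * ∑ r ∈ Finset.range m, (r:ℤ)^2 = m * (m - 1) * (2*m - 1) := by
  induction m with
  | zero => simp
  | succ k ih => rw [Finset.sum_range_succ, mul_add]; push_cast; push_cast at ih; rw [ih]; ring

def Fs (d : ℤ) (m : ℕ) : ℤ := ∑ r ∈ Finset.range m, (r:ℤ) * ((d*r)/(m:ℤ))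

lemma dedekind_formula (d : ℤ) (m : ℕ) (hm : 0 < m) :
    (12*(m:ℚ)) * dedekindSum d (m:ℤ) =
      2*(d:ℚ)*((m:ℚ)-1)*(2*(m:ℚ)-1) - 3*(m:ℚ)*((m:ℚ)-1) - 12*(Fs d m : ℚ) := by
  have hm0 : (m:ℚ) ≠ 0 := by exact_mod_cast hm.ne'
  have hmz : (0:ℤ) < (m:ℤ) := by exact_mod_cast hm
  unfold dedekindSum
  rw [Int.toNat_natCast, Finset.mul_sum]
  have step : ∀ r ∈ Finset.range m,
      (12*(m:ℚ)) * ((r : ℚ) / (m:ℤ) * (((d:ℤ) * r : ℚ) / (m:ℤ) - ⌊((d:ℤ) * r : ℚ) / (m:ℤ)⌋ - 1 / 2))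
      = 12*(d:ℚ)*(r:ℚ)^2/m - 12*(r:ℚ)*(((d*(r:ℤ))/(m:ℤ) : ℤ) : ℚ) - 6*(r:ℚ) := by
    intro r _
    have hfl : ⌊((d:ℤ) * r : ℚ) / ((m:ℤ):ℚ)⌋ = (d*(r:ℤ))/(m:ℤ) := by
      rw [show ((d:ℚ) * (r:ℚ)) = (((d*(r:ℤ) : ℤ)):ℚ) by push_cast; ring]
      exact floor_cast_div _ _ hmz
    push_cast at hfl ⊢
    rw [hfl]
    field_simp
    ring
  rw [sum_Ico_one _ (by simp) m, Finset.sum_congr rfl step]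
  have hsq : (6:ℚ) * ∑ r ∈ Finset.range m, (r:ℚ)^2 = (m:ℚ)*((m:ℚ)-1)*(2*(m:ℚ)-1) := by
    have h2 := congrArg (fun z : ℤ => (z : ℚ)) (sum_range_sq_int m); push_cast at h2; linarith
  have hid : (2:ℚ) * ∑ r ∈ Finset.range m, (r:ℚ) = (m:ℚ)*((m:ℚ)-1) := by
    have h2 := congrArg (fun z : ℤ => (z : ℚ)) (sum_range_id_int m); push_cast at h2; linarith
  have hF : (Fs d m : ℚ) = ∑ r ∈ Finset.range m, (r:ℚ) * (((d*(r:ℤ))/(m:ℤ) : ℤ) : ℚ) := by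
    unfold Fs; push_cast; rfl
  rw [show ∀ X Y Z : ℚ, X - Y - Z = X - Y - Z from fun _ _ _ => rfl]
  simp only [Finset.sum_sub_distrib]
  rw [show (∑ r ∈ Finset.range m, 12*(d:ℚ)*(r:ℚ)^2/m) = (12*(d:ℚ)/m) * ∑ r ∈ Finset.range m, (r:ℚ)^2 by
      rw [Finset.mul_sum]; exact Finset.sum_congr rfl (fun r _ => by ring)]
  rw [show (∑ r ∈ Finset.range m, 12*(r:ℚ)*(((d*(r:ℤ))/(m:ℤ) : ℤ) : ℚ)) = 12 * ∑ r ∈ Finset.range m, (r:ℚ)*(((d*(r:ℤ))/(m:ℤ) : ℤ) : ℚ) by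
      rw [Finset.mul_sum]; exact Finset.sum_congr rfl (fun r _ => by ring)]
  rw [show (∑ r ∈ Finset.range m, 6*(r:ℚ)) = 6 * ∑ r ∈ Finset.range m, (r:ℚ) by
      rw [Finset.mul_sum]]
  rw [← hF]
  field_simp
  linear_combination (2*(d:ℚ)) * hsq - (3*(m:ℚ)) * hid

def Qs (d : ℤ) (m : ℕ) : ℤ := ∑ r ∈ Finset.range m, ((d*r)/(m:ℤ))^2

lemma key_mod (m : ℕ) (hm : 0 < m) {a d : ℤ} (had : ((m:ℤ)) ∣ a*d - 1) (t : ℤ) :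
    (a*((d*t) % (m:ℤ))) % (m:ℤ) = t % (m:ℤ) := by
  rw [Int.mul_emod, Int.emod_emod_of_dvd _ dvd_rfl, ← Int.mul_emod]
  have : (a * (d*t)) ≡ t [ZMOD (m:ℤ)] := by
    apply Int.ModEq.symm
    rw [Int.modEq_iff_dvd]
    obtain ⟨k, hk⟩ := had
    exact ⟨k*t, by linear_combination t*hk⟩
  exact this

lemma sum_emod_bij {M : Type*} [AddCommMonoid M] (m : ℕ) (hm : 0 < m) (d a : ℤ)
    (had : ((m:ℤ)) ∣ a*d - 1) (f : ℤ → M) :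
    ∑ t ∈ Finset.range m, f ((d*t) % (m:ℤ)) = ∑ u ∈ Finset.range m, f (u:ℤ) := by
  have hm0 : ((m:ℤ)) ≠ 0 := by exact_mod_cast hm.ne'
  have hmz : (0:ℤ) < (m:ℤ) := by exact_mod_cast hm
  have had' : ((m:ℤ)) ∣ d*a - 1 := by rwa [mul_comm] at had
  refine Finset.sum_nbij' (fun t => ((d*t) % (m:ℤ)).toNat) (fun u => ((a*u) % (m:ℤ)).toNat)
    ?_ ?_ ?_ ?_ ?_
  · intro t ht
    have h1 := Int.emod_nonneg (d*t) hm0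
    have h2 := Int.emod_lt_of_pos (d*t) hmz
    simp only [Finset.mem_range] at *
    omega
  · intro u hu
    have h1 := Int.emod_nonneg (a*u) hm0
    have h2 := Int.emod_lt_of_pos (a*u) hmz
    simp only [Finset.mem_range] at *
    omega
  · intro t ht
    simp only [Finset.mem_range] at ht
    have h1 := Int.emod_nonneg (d*t) hm0
    rw [Int.toNat_of_nonneg h1]
    have := key_mod m hm had (t:ℤ)
    rw [this, Int.emod_eq_of_lt (by positivity) (by exact_mod_cast ht)]
    omega
  · intro u hu
    simp only [Finset.mem_range] at hu
    have h1 := Int.emod_nonneg (a*u) hm0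
    rw [Int.toNat_of_nonneg h1]
    have := key_mod m hm had' (u:ℤ)
    rw [this, Int.emod_eq_of_lt (by positivity) (by exact_mod_cast hu)]
    omega
  · intro t ht
    congr 1
    rw [Int.toNat_of_nonneg (Int.emod_nonneg (d*t) hm0)]

lemma sum_range_sq_int' (m : ℕ) : 6 * ∑ r ∈ Finset.range m, (r:ℤ)^2 = m * (m - 1) * (2*m - 1) := by
  induction m with
  | zero => simp
  | succ k ih => rw [Finset.sum_range_succ, mul_add]; push_cast; push_cast at ih; rw [ih]; ring

lemma FsQ (d a : ℤ) (m : ℕ) (hm : 0 < m) (had : ((m:ℤ)) ∣ a*d - 1) :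
    12*d*Fs d m = (d^2-1)*((m:ℤ)-1)*(2*(m:ℤ)-1) + 6*(m:ℤ)*Qs d m := by
  have hm0 : ((m:ℤ)) ≠ 0 := by exact_mod_cast hm.ne'
  have hbij : ∑ r ∈ Finset.range m, ((d*r) % (m:ℤ))^2 = ∑ r ∈ Finset.range m, ((r:ℤ))^2 :=
    sum_emod_bij m hm d a had (fun x => x^2)
  have keyEq : ∑ r ∈ Finset.range m, (d*(r:ℤ))^2
      = 2*(m:ℤ)*d*Fs d m - (m:ℤ)^2 * Qs d m + ∑ r ∈ Finset.range m, ((d*r) % (m:ℤ))^2 := by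
    unfold Fs Qs
    rw [Finset.mul_sum, Finset.mul_sum, ← Finset.sum_sub_distrib, ← Finset.sum_add_distrib]
    refine Finset.sum_congr rfl (fun r _ => ?_)
    have hρ : (d*(r:ℤ)) % (m:ℤ) = d*r - (m:ℤ)*((d*(r:ℤ))/(m:ℤ)) := by
      linarith [Int.emod_add_mul_ediv (d*(r:ℤ)) (m:ℤ)]
    rw [hρ]; ring
  have hd2 : ∑ r ∈ Finset.range m, (d*(r:ℤ))^2 = d^2 * ∑ r ∈ Finset.range m, ((r:ℤ))^2 := by
    rw [Finset.mul_sum]; exact Finset.sum_congr rfl (fun r _ => by ring)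
  have hsq := sum_range_sq_int' m
  have big : (m:ℤ) * (12*d*Fs d m) = (m:ℤ) * ((d^2-1)*((m:ℤ)-1)*(2*(m:ℤ)-1) + 6*(m:ℤ)*Qs d m) := by
    linear_combination -6*keyEq + 6*hd2 - 6*hbij + (d^2-1)*hsq
  exact mul_left_cancel₀ hm0 big

lemma Num_dvd (d a : ℤ) (m : ℕ) (hm : 0 < m) (hco : IsCoprime ((m:ℤ)) d)
    (had : ((m:ℤ)) ∣ a*d - 1) :
    (m:ℤ) ∣ (a + d - 2*d*((m:ℤ)-1)*(2*(m:ℤ)-1) + 3*(m:ℤ)*((m:ℤ)-1) + 12*Fs d m) := by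
  have hdX : (m:ℤ) ∣ d * (a + d - 2*d*((m:ℤ)-1)*(2*(m:ℤ)-1) + 3*(m:ℤ)*((m:ℤ)-1) + 12*Fs d m) := by
    obtain ⟨k, hk⟩ := had
    exact ⟨k + (-(d^2+1)*(2*(m:ℤ)-3) + 3*d*((m:ℤ)-1) + 6*Qs d m),
      by linear_combination hk + FsQ d a m hm ⟨k, hk⟩⟩
  exact hco.dvd_of_dvd_mul_left hdX

def Ws (d : ℤ) (Nn m : ℕ) : ℤ :=
  ∑ t ∈ Finset.range Nn, ∑ s ∈ Finset.range m, (t:ℤ) * ((d*((t:ℤ)*m+s))/((Nn:ℤ)*m))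

lemma neg_ediv_of_not_dvd {x k : ℤ} (hk : 0 < k) (h : ¬ k ∣ x) : (-x)/k = -(x/k) - 1 := by
  have h1 : x % k ≠ 0 := fun hc => h (Int.dvd_iff_emod_eq_zero.mpr hc)
  have h2 := Int.emod_nonneg x hk.ne'
  have h3 := Int.emod_lt_of_pos x hk
  have h4 := Int.emod_add_mul_ediv x k
  exact ((Int.ediv_emod_unique (a := -x) (b := k) (q := -(x/k)-1) (r := k - x % k) hk).mpr
    ⟨by linarith, by omega, by omega⟩).1

lemma pair_floor {k d r : ℤ} (hk : 0 < k) (hr : 0 < r) (hrk : r < k) (hnd : ¬ k ∣ d*r) :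
    (d*r)/k + (d*(k-r))/k = d - 1 := by
  have h1 : d*(k-r) = -(d*r) + k*d := by ring
  rw [h1, Int.add_mul_ediv_left _ d hk.ne', neg_ediv_of_not_dvd hk hnd]
  ring

lemma shift_one (Nn : ℕ) (hN : 0 < Nn) (w : ℤ) :
    (∑ t ∈ Finset.range Nn, (w + 1 + (t:ℤ))/((Nn:ℤ)))
      = (∑ t ∈ Finset.range Nn, (w + (t:ℤ))/((Nn:ℤ))) + 1 := by
  have hN0 : ((Nn:ℤ)) ≠ 0 := by exact_mod_cast hN.ne'
  set f : ℕ → ℤ := fun t => (w + (t:ℤ))/((Nn:ℤ)) with hf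
  have h1 : (∑ t ∈ Finset.range Nn, (w + 1 + (t:ℤ))/((Nn:ℤ)))
      = ∑ t ∈ Finset.range Nn, f (t+1) := by
    refine Finset.sum_congr rfl (fun t _ => ?_)
    simp only [hf]; push_cast; ring_nf
  have h2 := Finset.sum_range_succ' f Nn
  have h2b := Finset.sum_range_succ f Nn
  have h3 : f Nn = w/((Nn:ℤ)) + 1 := by
    simp only [hf]
    rw [show w + ((Nn:ℕ):ℤ) = w + (Nn:ℤ)*1 by push_cast; ring, Int.add_mul_ediv_left _ 1 hN0]
  have h4 : f 0 = w/((Nn:ℤ)) := by simp [hf]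
  rw [h1]
  rw [h3] at h2b; rw [h4] at h2
  linarith [h2, h2b]

lemma sum_shift_ediv (Nn : ℕ) (hN : 0 < Nn) (v : ℤ) :
    ∑ t ∈ Finset.range Nn, (v + t)/((Nn:ℤ)) = v := by
  induction v using Int.induction_on with
  | zero =>
    rw [Finset.sum_eq_zero]
    intro t ht
    simp only [Finset.mem_range] at ht
    rw [zero_add]
    exact Int.ediv_eq_zero_of_lt (by positivity) (by exact_mod_cast ht)
  | succ i ih => rw [shift_one Nn hN (i:ℤ), ih]
  | pred i ih =>
    have h := shift_one Nn hN (-(i:ℤ) - 1)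
    have e1 : (∑ t ∈ Finset.range Nn, (-(i:ℤ) - 1 + 1 + (t:ℤ))/((Nn:ℤ)))
        = ∑ t ∈ Finset.range Nn, (-(i:ℤ) + (t:ℤ))/((Nn:ℤ)) := by
      refine Finset.sum_congr rfl (fun t _ => ?_); ring_nf
    rw [e1, ih] at h
    omega

lemma ediv_mul_shift {x w mz Nz : ℤ} (hm : 0 < mz) (hN : 0 < Nz) (hw : 0 ≤ w) (hw2 : w < mz) :
    (mz*x + w)/(mz*Nz) = x/Nz := by
  have hq := Int.emod_add_mul_ediv x Nz
  have h2 := Int.emod_nonneg x hN.ne'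
  have h3 := Int.emod_lt_of_pos x hN
  have hpos : 0 < mz*Nz := mul_pos hm hN
  exact ((Int.ediv_emod_unique (a := mz*x+w) (b := mz*Nz) (q := x/Nz) (r := mz*(x % Nz) + w)
    hpos).mpr ⟨by linear_combination mz*hq, by positivity, by nlinarith⟩).1

lemma sum_hermite (Nn : ℕ) (hN : 0 < Nn) (c₀ : ℤ) (hc₀ : 0 < c₀) (e : ℤ) :
    ∑ u ∈ Finset.range Nn, (e + (u:ℤ)*c₀)/((Nn:ℤ)*c₀) = e/c₀ := by
  have hNz : (0:ℤ) < Nn := by exact_mod_cast hN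
  have pt : ∀ u ∈ Finset.range Nn, (e + (u:ℤ)*c₀)/((Nn:ℤ)*c₀) = (e/c₀ + u)/((Nn:ℤ)) := by
    intro u _
    have h1 : e + (u:ℤ)*c₀ = c₀*(e/c₀ + u) + e % c₀ := by
      linear_combination - Int.emod_add_mul_ediv e c₀
    rw [h1, show ((Nn:ℤ))*c₀ = c₀*(Nn:ℤ) by ring,
      ediv_mul_shift hc₀ hNz (Int.emod_nonneg e hc₀.ne') (Int.emod_lt_of_pos e hc₀)]
  rw [Finset.sum_congr rfl pt, sum_shift_ediv Nn hN]

lemma gl_sum (Nn : ℕ) (hN : 0 < Nn) (d : ℤ) (hcop : IsCoprime ((Nn:ℤ)) d) :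
    2 * ∑ t ∈ Finset.range Nn, (d*t)/((Nn:ℤ)) = (d-1)*((Nn:ℤ)-1) := by
  obtain ⟨M, rfl⟩ : ∃ M, Nn = M + 1 := ⟨Nn - 1, by omega⟩
  have hNz : (0:ℤ) < ((M+1:ℕ):ℤ) := by exact_mod_cast hN
  set f : ℕ → ℤ := fun t => (d*t)/(((M+1:ℕ)):ℤ) with hf
  have h0 : f 0 = 0 := by simp [hf]
  have hsp := Finset.sum_range_succ' f M
  rw [h0, add_zero] at hsp
  have hrefl := Finset.sum_range_reflect (fun i => f (i+1)) M
  have pt : ∀ i ∈ Finset.range M, f (M - 1 - i + 1) + f (i+1) = d - 1 := by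
    intro i hi
    simp only [Finset.mem_range] at hi
    have hMi : M - 1 - i + 1 = M - i := by omega
    rw [hMi]
    simp only [hf]
    have hc1 : ((M - i : ℕ):ℤ) = ((M+1:ℕ):ℤ) - ((i+1:ℕ):ℤ) := by push_cast; omega
    rw [hc1]
    have hr0 : (0:ℤ) < ((i+1:ℕ):ℤ) := by positivity
    have hrk : ((i+1:ℕ):ℤ) < ((M+1:ℕ):ℤ) := by exact_mod_cast by omega
    have hnd : ¬ ((M+1:ℕ):ℤ) ∣ d*((i+1:ℕ):ℤ) := by
      intro hdvd
      have h5 := hcop.dvd_of_dvd_mul_left hdvd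
      have h6 := Int.le_of_dvd hr0 h5
      omega
    rw [add_comm]
    exact pair_floor hNz hr0 hrk hnd
  have hsum : ∑ i ∈ Finset.range M, (f (M - 1 - i + 1) + f (i+1)) = M * (d-1) := by
    rw [Finset.sum_congr rfl pt, Finset.sum_const, Finset.card_range]
    simp [mul_comm]
  rw [Finset.sum_add_distrib, hrefl] at hsum
  rw [hsp]
  push_cast
  push_cast at hsum
  linarith

lemma tsum_eq (Nn m : ℕ) (hN : 0 < Nn) (hm : 0 < m) (d a : ℤ) (hadN : ((Nn:ℤ)) ∣ a*d - 1)
    (s : ℕ) :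
    ∑ t ∈ Finset.range Nn, (d*((t:ℤ)*m+s))/((Nn:ℤ)*m)
      = (d*s)/(m:ℤ) + ∑ t ∈ Finset.range Nn, (d*t)/((Nn:ℤ)) := by
  have hNz : (0:ℤ) < Nn := by exact_mod_cast hN
  have hmz : (0:ℤ) < m := by exact_mod_cast hm
  have hNm0 : ((Nn:ℤ)) * m ≠ 0 := by positivity
  have pt : ∀ t ∈ Finset.range Nn,
      (d*((t:ℤ)*m+s))/((Nn:ℤ)*m)
        = (d*t)/((Nn:ℤ)) + (d*s + ((d*t) % ((Nn:ℤ)))*m)/((Nn:ℤ)*m) := by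
    intro t _
    have h1 : d*((t:ℤ)*m+s) = (d*s + ((d*t) % ((Nn:ℤ)))*m) + ((Nn:ℤ)*m)*((d*t)/((Nn:ℤ))) := by
      linear_combination (-(m:ℤ)) * (Int.emod_add_mul_ediv (d*t) ((Nn:ℤ)))
    rw [h1, Int.add_mul_ediv_left _ _ hNm0]
    ring
  rw [Finset.sum_congr rfl pt, Finset.sum_add_distrib]
  have h2 : ∑ t ∈ Finset.range Nn, (d*s + ((d*t) % ((Nn:ℤ)))*m)/((Nn:ℤ)*m) = (d*s)/(m:ℤ) := by
    rw [sum_emod_bij Nn hN d a hadN (fun x => (d*s + x*m)/((Nn:ℤ)*m))]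
    exact sum_hermite Nn hN (m:ℤ) hmz (d*s)
  rw [h2]
  ring

lemma sum_grid {M : Type*} [AddCommMonoid M] (f : ℕ → M) (n m : ℕ) :
    ∑ r ∈ Finset.range (n*m), f r = ∑ t ∈ Finset.range n, ∑ s ∈ Finset.range m, f (t*m+s) := by
  induction n with
  | zero => simp
  | succ k ih =>
    rw [show (k+1)*m = k*m + m by ring, Finset.sum_range_add, ih, Finset.sum_range_succ]

lemma step3 (Nn m : ℕ) (hN : 0 < Nn) (hm : 0 < m) (d a : ℤ) (hadN : ((Nn:ℤ)) ∣ a*d - 1)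
    (hcopN : IsCoprime ((Nn:ℤ)) d) :
    4 * Fs d (Nn*m) = 4*(m:ℤ)*Ws d Nn m + 4*Fs d m + (d-1)*((Nn:ℤ)-1)*(m:ℤ)*((m:ℤ)-1) := by
  have hcast : (((Nn*m : ℕ)):ℤ) = ((Nn:ℤ))*m := by push_cast; ring
  have hgrid : Fs d (Nn*m)
      = ∑ t ∈ Finset.range Nn, ∑ s ∈ Finset.range m,
          ((t:ℤ)*m+s) * ((d*((t:ℤ)*m+s))/((Nn:ℤ)*m)) := by
    unfold Fs
    rw [sum_grid (fun r => (r:ℤ) * ((d*r)/(((Nn*m:ℕ)):ℤ))) Nn m]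
    refine Finset.sum_congr rfl (fun t _ => Finset.sum_congr rfl (fun s _ => ?_))
    rw [hcast]
    push_cast
    ring_nf
  have hsplit : ∑ t ∈ Finset.range Nn, ∑ s ∈ Finset.range m,
        ((t:ℤ)*m+s) * ((d*((t:ℤ)*m+s))/((Nn:ℤ)*m))
      = (m:ℤ) * Ws d Nn m
        + ∑ s ∈ Finset.range m, (s:ℤ) * (∑ t ∈ Finset.range Nn, (d*((t:ℤ)*m+s))/((Nn:ℤ)*m)) := by
    calc ∑ t ∈ Finset.range Nn, ∑ s ∈ Finset.range m,
          ((t:ℤ)*m+s) * ((d*((t:ℤ)*m+s))/((Nn:ℤ)*m))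
        = ∑ t ∈ Finset.range Nn, ∑ s ∈ Finset.range m,
            ((m:ℤ)*((t:ℤ) * ((d*((t:ℤ)*m+s))/((Nn:ℤ)*m)))
              + (s:ℤ) * ((d*((t:ℤ)*m+s))/((Nn:ℤ)*m))) := by
          refine Finset.sum_congr rfl (fun t _ => Finset.sum_congr rfl (fun s _ => by ring))
      _ = (∑ t ∈ Finset.range Nn, ∑ s ∈ Finset.range m,
            (m:ℤ)*((t:ℤ) * ((d*((t:ℤ)*m+s))/((Nn:ℤ)*m))))
          + ∑ t ∈ Finset.range Nn, ∑ s ∈ Finset.range m,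
            (s:ℤ) * ((d*((t:ℤ)*m+s))/((Nn:ℤ)*m)) := by
          rw [← Finset.sum_add_distrib]
          exact Finset.sum_congr rfl (fun t _ => by rw [← Finset.sum_add_distrib])
      _ = (m:ℤ) * Ws d Nn m
          + ∑ s ∈ Finset.range m, (s:ℤ) * (∑ t ∈ Finset.range Nn, (d*((t:ℤ)*m+s))/((Nn:ℤ)*m)) := by
          congr 1
          · unfold Ws
            rw [Finset.mul_sum]
            exact Finset.sum_congr rfl (fun t _ => by rw [Finset.mul_sum])
          · rw [Finset.sum_comm]
            exact Finset.sum_congr rfl (fun s _ => by rw [Finset.mul_sum])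
  have htper : ∀ s ∈ Finset.range m,
      (s:ℤ) * (∑ t ∈ Finset.range Nn, (d*((t:ℤ)*m+s))/((Nn:ℤ)*m))
        = (s:ℤ) * ((d*s)/(m:ℤ)) + (s:ℤ) * (∑ t ∈ Finset.range Nn, (d*t)/((Nn:ℤ))) := by
    intro s _
    rw [tsum_eq Nn m hN hm d a hadN s]
    ring
  have hFm : ∑ s ∈ Finset.range m, ((s:ℤ) * ((d*s)/(m:ℤ))) = Fs d m := rfl
  have hlast : ∑ s ∈ Finset.range m,
      ((s:ℤ) * ((d*s)/(m:ℤ)) + (s:ℤ) * (∑ t ∈ Finset.range Nn, (d*t)/((Nn:ℤ))))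
      = Fs d m + (∑ s ∈ Finset.range m, (s:ℤ)) * (∑ t ∈ Finset.range Nn, (d*t)/((Nn:ℤ))) := by
    rw [Finset.sum_add_distrib, hFm, Finset.sum_mul]
  have hgl := gl_sum Nn hN d hcopN
  have hid := sum_range_id_int m
  rw [hgrid, hsplit, Finset.sum_congr rfl htper, hlast]
  linear_combination (2 * ∑ s ∈ Finset.range m, (s:ℤ)) * hgl
    + ((d-1)*((Nn:ℤ)-1)) * hid

def As (d : ℤ) (Nn m : ℕ) (t : ℕ) : ℤ := ∑ s ∈ Finset.Ico 1 m, ((d*((t:ℤ)*m+s))/((Nn:ℤ)*m))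

lemma inner_split (d : ℤ) (Nn m : ℕ) (hN : 0 < Nn) (hm : 0 < m) (t : ℕ) :
    ∑ s ∈ Finset.range m, (t:ℤ) * ((d*((t:ℤ)*m+s))/((Nn:ℤ)*m))
      = (t:ℤ)*((d*t)/((Nn:ℤ))) + (t:ℤ) * As d Nn m t := by
  have hmz : (0:ℤ) < m := by exact_mod_cast hm
  have hNz : (0:ℤ) < Nn := by exact_mod_cast hN
  rw [Finset.range_eq_Ico, Finset.sum_eq_sum_Ico_succ_bot hm]
  have h0 : (d*((t:ℤ)*m+(0:ℕ)))/((Nn:ℤ)*m) = (d*t)/((Nn:ℤ)) := by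
    rw [show d*((t:ℤ)*m+((0:ℕ):ℤ)) = (m:ℤ)*(d*t) + 0 by push_cast; ring,
        show ((Nn:ℤ))*m = (m:ℤ)*Nn by ring]
    exact ediv_mul_shift hmz hNz le_rfl hmz
  rw [h0]
  congr 1
  unfold As
  rw [Finset.mul_sum]

lemma As_pair (d : ℤ) (Nn m : ℕ) (hN : 0 < Nn) (hm : 0 < m)
    (hcop : IsCoprime (((Nn:ℤ))*m) d) (t : ℕ) (ht : t < Nn) :
    As d Nn m t + As d Nn m (Nn-1-t) = ((m:ℤ)-1)*(d-1) := by
  have hmz : (0:ℤ) < m := by exact_mod_cast hm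
  have hNz : (0:ℤ) < Nn := by exact_mod_cast hN
  have hk : (0:ℤ) < (Nn:ℤ)*m := by positivity
  have hrefl : As d Nn m (Nn-1-t)
      = ∑ s ∈ Finset.Ico 1 m, ((d*(((Nn:ℤ))*m - ((t:ℤ)*m+s)))/((Nn:ℤ)*m)) := by
    unfold As
    refine Finset.sum_nbij' (fun s => m - s) (fun s => m - s) ?_ ?_ ?_ ?_ ?_
    · intro s hs; simp only [Finset.mem_Ico] at *; omega
    · intro s hs; simp only [Finset.mem_Ico] at *; omega
    · intro s hs; simp only [Finset.mem_Ico] at hs; omega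
    · intro s hs; simp only [Finset.mem_Ico] at hs; omega
    · intro s hs
      simp only [Finset.mem_Ico] at hs
      congr 2
      have c1 : ((Nn-1-t : ℕ):ℤ) = (Nn:ℤ) - 1 - t := by omega
      have c2 : ((m - s : ℕ):ℤ) = (m:ℤ) - s := by omega
      rw [c1, c2]
      ring
  rw [hrefl]
  unfold As
  rw [← Finset.sum_add_distrib]
  have pt : ∀ s ∈ Finset.Ico 1 m,
      ((d*((t:ℤ)*m+s))/((Nn:ℤ)*m)) + ((d*(((Nn:ℤ))*m - ((t:ℤ)*m+s)))/((Nn:ℤ)*m)) = d - 1 := by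
    intro s hs
    simp only [Finset.mem_Ico] at hs
    have hsz : (1:ℤ) ≤ s := by exact_mod_cast hs.1
    have hsm : (s:ℤ) < m := by exact_mod_cast hs.2
    have htz : (t:ℤ) ≤ (Nn:ℤ) - 1 := by omega
    have hr0 : (0:ℤ) < (t:ℤ)*m+s := by positivity
    have hrk : (t:ℤ)*m+s < (Nn:ℤ)*m := by nlinarith
    have hnd : ¬ ((Nn:ℤ)*m) ∣ d*((t:ℤ)*m+s) := by
      intro hdvd
      have h5 := hcop.dvd_of_dvd_mul_left hdvd
      have h6 := Int.le_of_dvd hr0 h5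
      omega
    exact pair_floor hk hr0 hrk hnd
  rw [Finset.sum_congr rfl pt, Finset.sum_const, Nat.card_Ico]
  simp only [nsmul_eq_mul]
  have hc : ((m - 1 : ℕ):ℤ) = (m:ℤ) - 1 := by omega
  rw [hc]

lemma evenV9 (d : ℤ) (hp : ¬ ((3:ℤ) ∣ d)) :
    Even ((d*1)/9 + (d*3)/9 + (d*5)/9 + (d*7)/9 : ℤ) := by
  obtain ⟨k, j, hd, hj0, hjN⟩ : ∃ k j : ℤ, d = 9*k + j ∧ 0 ≤ j ∧ j < 9 :=
    ⟨d/9, d%9, by omega, by omega, by omega⟩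
  subst hd
  have e : ∀ t:ℤ, ((9*k+j)*t)/9 = k*t + (j*t)/9 := fun t => by
    rw [show (9*k+j)*t = j*t + 9*(k*t) by ring, Int.add_mul_ediv_left _ _ (by norm_num : (9:ℤ) ≠ 0)]; ring
  rw [e 1, e 3, e 5, e 7]
  rw [Int.even_iff]
  interval_cases j <;> omega

lemma parity9 (m : ℕ) (hm : 0 < m) (d : ℤ) (hcop : IsCoprime (((9*m:ℕ)):ℤ) d) :
    Even (Ws d 9 m) := by
  have hcop' : IsCoprime (((9:ℕ):ℤ)*(m:ℤ)) d := by
    have hcast : (((9*m:ℕ)):ℤ) = ((9:ℕ):ℤ)*(m:ℤ) := by push_cast; ring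
    rwa [hcast] at hcop
  have hpd : ¬ ((3:ℤ) ∣ d) := by
    intro hd
    have hco3 : IsCoprime ((3:ℤ)) d :=
      IsCoprime.of_isCoprime_of_dvd_left hcop' ⟨(3:ℤ)*(m:ℤ), by push_cast; ring⟩
    have hg := Int.isCoprime_iff_gcd_eq_one.mp hco3
    have h1 : (3:ℤ) ∣ 1 := by
      have h2 := Int.dvd_coe_gcd (dvd_refl (3:ℤ)) hd
      rwa [hg] at h2
    norm_num at h1
  have hV : Even ((d*1)/((9:ℕ):ℤ) + (d*3)/((9:ℕ):ℤ) + (d*5)/((9:ℕ):ℤ) + (d*7)/((9:ℕ):ℤ)) := by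
    have h := evenV9 d hpd
    push_cast
    push_cast at h
    convert h using 2 <;> norm_num
  have hA1 : As d 9 m 1 + As d 9 m 7 = ((m:ℤ)-1)*(d-1) := by
    have h := As_pair d 9 m (by norm_num) hm hcop' 1 (by norm_num)
    norm_num at h
    exact h
  have hA3 : As d 9 m 3 + As d 9 m 5 = ((m:ℤ)-1)*(d-1) := by
    have h := As_pair d 9 m (by norm_num) hm hcop' 3 (by norm_num)
    norm_num at h
    exact h
  have hW : Ws d 9 m = ∑ t ∈ Finset.range 9,
      ((t:ℤ)*((d*t)/(((9:ℕ)):ℤ)) + (t:ℤ) * As d 9 m t) := by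
    unfold Ws
    exact Finset.sum_congr rfl (fun t _ => inner_split d 9 m (by norm_num) hm t)
  rw [hW]
  simp only [Finset.sum_range_succ, Finset.sum_range_zero]
  push_cast
  obtain ⟨v, hv⟩ := hV
  refine ⟨v + 1*(((m:ℤ)-1)*(d-1)) + (((d*2)/((9:ℕ):ℤ)) + (As d 9 m 2) + ((d*3)/((9:ℕ):ℤ)) + (As d 9 m 3) + 2*((d*4)/((9:ℕ):ℤ)) + 2*(As d 9 m 4) + 2*((d*5)/((9:ℕ):ℤ)) + 2*(As d 9 m 5) + 3*((d*6)/((9:ℕ):ℤ)) + 3*(As d 9 m 6) + 3*((d*7)/((9:ℕ):ℤ)) + 3*(As d 9 m 7) + 4*((d*8)/((9:ℕ):ℤ)) + 4*(As d 9 m 8)), ?_⟩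
  push_cast at hv ⊢
  linear_combination hv + hA1 + hA3

lemma evenV25 (d : ℤ) (hp : ¬ ((5:ℤ) ∣ d)) :
    Even ((d*1)/25 + (d*3)/25 + (d*5)/25 + (d*7)/25 + (d*9)/25 + (d*11)/25 + (d*13)/25 + (d*15)/25 + (d*17)/25 + (d*19)/25 + (d*21)/25 + (d*23)/25 : ℤ) := by
  obtain ⟨k, j, hd, hj0, hjN⟩ : ∃ k j : ℤ, d = 25*k + j ∧ 0 ≤ j ∧ j < 25 :=
    ⟨d/25, d%25, by omega, by omega, by omega⟩
  subst hd
  have e : ∀ t:ℤ, ((25*k+j)*t)/25 = k*t + (j*t)/25 := fun t => by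
    rw [show (25*k+j)*t = j*t + 25*(k*t) by ring, Int.add_mul_ediv_left _ _ (by norm_num : (25:ℤ) ≠ 0)]; ring
  rw [e 1, e 3, e 5, e 7, e 9, e 11, e 13, e 15, e 17, e 19, e 21, e 23]
  rw [Int.even_iff]
  interval_cases j <;> omega

lemma parity25 (m : ℕ) (hm : 0 < m) (d : ℤ) (hcop : IsCoprime (((25*m:ℕ)):ℤ) d) :
    Even (Ws d 25 m) := by
  have hcop' : IsCoprime (((25:ℕ):ℤ)*(m:ℤ)) d := by
    have hcast : (((25*m:ℕ)):ℤ) = ((25:ℕ):ℤ)*(m:ℤ) := by push_cast; ring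
    rwa [hcast] at hcop
  have hpd : ¬ ((5:ℤ) ∣ d) := by
    intro hd
    have hco3 : IsCoprime ((5:ℤ)) d :=
      IsCoprime.of_isCoprime_of_dvd_left hcop' ⟨(5:ℤ)*(m:ℤ), by push_cast; ring⟩
    have hg := Int.isCoprime_iff_gcd_eq_one.mp hco3
    have h1 : (5:ℤ) ∣ 1 := by
      have h2 := Int.dvd_coe_gcd (dvd_refl (5:ℤ)) hd
      rwa [hg] at h2
    norm_num at h1
  have hV : Even ((d*1)/((25:ℕ):ℤ) + (d*3)/((25:ℕ):ℤ) + (d*5)/((25:ℕ):ℤ) + (d*7)/((25:ℕ):ℤ) + (d*9)/((25:ℕ):ℤ) + (d*11)/((25:ℕ):ℤ) + (d*13)/((25:ℕ):ℤ) + (d*15)/((25:ℕ):ℤ) + (d*17)/((25:ℕ):ℤ) + (d*19)/((25:ℕ):ℤ) + (d*21)/((25:ℕ):ℤ) + (d*23)/((25:ℕ):ℤ)) := by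
    have h := evenV25 d hpd
    push_cast
    push_cast at h
    convert h using 2 <;> norm_num
  have hA1 : As d 25 m 1 + As d 25 m 23 = ((m:ℤ)-1)*(d-1) := by
    have h := As_pair d 25 m (by norm_num) hm hcop' 1 (by norm_num)
    norm_num at h
    exact h
  have hA3 : As d 25 m 3 + As d 25 m 21 = ((m:ℤ)-1)*(d-1) := by
    have h := As_pair d 25 m (by norm_num) hm hcop' 3 (by norm_num)
    norm_num at h
    exact h
  have hA5 : As d 25 m 5 + As d 25 m 19 = ((m:ℤ)-1)*(d-1) := by
    have h := As_pair d 25 m (by norm_num) hm hcop' 5 (by norm_num)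
    norm_num at h
    exact h
  have hA7 : As d 25 m 7 + As d 25 m 17 = ((m:ℤ)-1)*(d-1) := by
    have h := As_pair d 25 m (by norm_num) hm hcop' 7 (by norm_num)
    norm_num at h
    exact h
  have hA9 : As d 25 m 9 + As d 25 m 15 = ((m:ℤ)-1)*(d-1) := by
    have h := As_pair d 25 m (by norm_num) hm hcop' 9 (by norm_num)
    norm_num at h
    exact h
  have hA11 : As d 25 m 11 + As d 25 m 13 = ((m:ℤ)-1)*(d-1) := by
    have h := As_pair d 25 m (by norm_num) hm hcop' 11 (by norm_num)
    norm_num at h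
    exact h
  have hW : Ws d 25 m = ∑ t ∈ Finset.range 25,
      ((t:ℤ)*((d*t)/(((25:ℕ)):ℤ)) + (t:ℤ) * As d 25 m t) := by
    unfold Ws
    exact Finset.sum_congr rfl (fun t _ => inner_split d 25 m (by norm_num) hm t)
  rw [hW]
  simp only [Finset.sum_range_succ, Finset.sum_range_zero]
  push_cast
  obtain ⟨v, hv⟩ := hV
  refine ⟨v + 3*(((m:ℤ)-1)*(d-1)) + (((d*2)/((25:ℕ):ℤ)) + (As d 25 m 2) + ((d*3)/((25:ℕ):ℤ)) + (As d 25 m 3) + 2*((d*4)/((25:ℕ):ℤ)) + 2*(As d 25 m 4) + 2*((d*5)/((25:ℕ):ℤ)) + 2*(As d 25 m 5) + 3*((d*6)/((25:ℕ):ℤ)) + 3*(As d 25 m 6) + 3*((d*7)/((25:ℕ):ℤ)) + 3*(As d 25 m 7) + 4*((d*8)/((25:ℕ):ℤ)) + 4*(As d 25 m 8) + 4*((d*9)/((25:ℕ):ℤ)) + 4*(As d 25 m 9) + 5*((d*10)/((25:ℕ):ℤ)) + 5*(As d 25 m 10) + 5*((d*11)/((25:ℕ):ℤ)) + 5*(As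 d 25 m 11) + 6*((d*12)/((25:ℕ):ℤ)) + 6*(As d 25 m 12) + 6*((d*13)/((25:ℕ):ℤ)) + 6*(As d 25 m 13) + 7*((d*14)/((25:ℕ):ℤ)) + 7*(As d 25 m 14) + 7*((d*15)/((25:ℕ):ℤ)) + 7*(As d 25 m 15) + 8*((d*16)/((25:ℕ):ℤ)) + 8*(As d 25 m 16) + 8*((d*17)/((25:ℕ):ℤ)) + 8*(As d 25 m 17) + 9*((d*18)/((25:ℕ):ℤ)) + 9*(As d 25 m 18) + 9*((d*19)/((25:ℕ):ℤ)) + 9*(As d 25 m 19) + 10*((d*20)/((25:ℕ):ℤ)) + 10*(As d 25 m 20) + 10*((d*21)/((25:ℕ):ℤ)) + 10*(As d 25 m 21) + 11*((d*22)/((25:ℕ):ℤ)) + 11*(As d 25 m 22) + 11*((d*23)/((25:ℕ):ℤ)) + 11*(As d 25 m 23) + 12*((d*24)/((25:ℕ):ℤ)) + 12*(As d 25 m 24)), ?_⟩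
  push_cast at hv ⊢
  linear_combination hv + hA1 + hA3 + hA5 + hA7 + hA9 + hA11

theorem dedekindSum_congruence (N : ℕ) (hN : N ∈ ({2, 3, 4, 5, 7, 9, 13, 25} : Finset ℕ))
    (c d a : ℤ) (hdvd : (N : ℤ) ∣ c) (hcop : IsCoprime c d) (hc : 0 < c)
    (ha : a * d ≡ 1 [ZMOD c]) :
    ∃ m : ℤ,
      (((a : ℚ) + d) / c - 12 * dedekindSum d c) -
        (((a : ℚ) + d) / ((c / (N : ℤ) : ℤ) : ℚ) - 12 * dedekindSum d (c / (N : ℤ))) =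
      ((N : ℚ) - 1) * m := by
  have hNpos : 0 < N := by fin_cases hN <;> norm_num
  have hn0 : (0:ℤ) < (N:ℤ) := by exact_mod_cast hNpos
  obtain ⟨c₀, hcc⟩ := hdvd
  have hc₀ : 0 < c₀ := by nlinarith [hcc ▸ hc]
  have hdivc : c / (N:ℤ) = c₀ := by rw [hcc]; exact Int.mul_ediv_cancel_left _ hn0.ne'
  set m : ℕ := c₀.toNat with hmdef
  have hmz : ((m:ℕ):ℤ) = c₀ := Int.toNat_of_nonneg hc₀.le
  have hmpos : 0 < m := by omega
  have hcNm : (((N*m : ℕ)):ℤ) = c := by push_cast; rw [hmz, ← hcc]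
  have hNmpos : 0 < N*m := by positivity
  have had_c : c ∣ a*d - 1 := by
    obtain ⟨k, hk⟩ := Int.ModEq.dvd ha
    exact ⟨-k, by linarith⟩
  have hc₀_dvd_c : c₀ ∣ c := ⟨(N:ℤ), by rw [hcc]; ring⟩
  have hn_dvd_c : (N:ℤ) ∣ c := ⟨c₀, hcc⟩
  have had_c₀ : c₀ ∣ a*d - 1 := dvd_trans hc₀_dvd_c had_c
  have had_n : (N:ℤ) ∣ a*d - 1 := dvd_trans hn_dvd_c had_c
  have hco_c₀ : IsCoprime c₀ d := IsCoprime.of_isCoprime_of_dvd_left hcop hc₀_dvd_c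
  have hco_n : IsCoprime ((N:ℤ)) d := IsCoprime.of_isCoprime_of_dvd_left hcop hn_dvd_c
  obtain ⟨P, hP⟩ := Num_dvd d a (N*m) hNmpos (by rw [hcNm]; exact hcop) (by rw [hcNm]; exact had_c)
  obtain ⟨P₀, hP₀⟩ := Num_dvd d a m hmpos (by rw [hmz]; exact hco_c₀) (by rw [hmz]; exact had_c₀)
  rw [hcNm] at hP
  rw [hmz] at hP₀
  have hPn := hP
  rw [hcc] at hPn
  have hs3 := step3 N m hNpos hmpos d a had_n hco_n
  rw [hmz] at hs3
  obtain ⟨R', hR'⟩ : c₀ ∣ (-(a+d) - 2*d*(2*(N:ℤ)*c₀^2-1) + 3*(N:ℤ)*c₀^2 - 12*Fs d m) := by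
    refine ⟨-2*d*(2*(N:ℤ)*c₀+2*c₀-3) + 3*(N:ℤ)*c₀ + 3*c₀ - 3 - P₀, ?_⟩
    linear_combination -hP₀
  have hkey : (N:ℤ)*(P-P₀) - 12*Ws d N m = ((N:ℤ)-1)*(R' + 3*(d-1)*(c₀-1)) := by
    have hc4 : (4*c₀) ≠ 0 := by positivity
    apply mul_left_cancel₀ hc4
    linear_combination (-4:ℤ)*hPn + (4*(N:ℤ))*hP₀ + 12*hs3 + (4*((N:ℤ)-1))*hR'
  have h12W : ((N:ℤ)-1) ∣ 12 * Ws d N m := by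
    have hcopNm : ∀ k : ℕ, k = N → IsCoprime (((k*m : ℕ)):ℤ) d := by
      intro k hk; subst hk; rw [hcNm]; exact hcop
    fin_cases hN
    · exact ⟨12 * Ws d 2 m, by norm_num⟩
    · exact dvd_mul_of_dvd_left (by norm_num) _
    · exact dvd_mul_of_dvd_left (by norm_num) _
    · exact dvd_mul_of_dvd_left (by norm_num) _
    · exact dvd_mul_of_dvd_left (by norm_num) _
    · obtain ⟨w, hw⟩ := parity9 m hmpos d (hcopNm 9 rfl)
      exact ⟨3*w, by rw [hw]; push_cast; ring⟩
    · exact dvd_mul_of_dvd_left (by norm_num) _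
    · obtain ⟨w, hw⟩ := parity25 m hmpos d (hcopNm 25 rfl)
      exact ⟨w, by rw [hw]; push_cast; ring⟩
  obtain ⟨w12, hw12⟩ := h12W
  have hPP : P - P₀ = ((N:ℤ)-1) * (R' + 3*(d-1)*(c₀-1) - (P - P₀) + w12) := by
    linear_combination hkey + hw12
  refine ⟨R' + 3*(d-1)*(c₀-1) - (P - P₀) + w12, ?_⟩
  rw [hdivc]
  have hcq : (c:ℚ) ≠ 0 := by exact_mod_cast hc.ne'
  have hc₀q : ((c₀:ℤ):ℚ) ≠ 0 := by exact_mod_cast hc₀.ne'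
  have hd1 := dedekind_formula d (N*m) hNmpos
  have hd0 := dedekind_formula d m hmpos
  have hq1 : (((N*m:ℕ)):ℚ) = (c:ℚ) := by exact_mod_cast hcNm
  have hq0 : (((m:ℕ)):ℚ) = ((c₀:ℤ):ℚ) := by exact_mod_cast hmz
  rw [hcNm, hq1] at hd1
  rw [hmz, hq0] at hd0
  have hPZ : ((a:ℚ) + d - 2*d*((c:ℚ)-1)*(2*(c:ℚ)-1) + 3*(c:ℚ)*((c:ℚ)-1) + 12*(Fs d (N*m) : ℚ))
      = (c:ℚ)*(P:ℚ) := by exact_mod_cast hP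
  have hPZ₀ : ((a:ℚ) + d - 2*d*(((c₀:ℤ):ℚ)-1)*(2*((c₀:ℤ):ℚ)-1)
        + 3*((c₀:ℤ):ℚ)*(((c₀:ℤ):ℚ)-1) + 12*(Fs d m : ℚ))
      = ((c₀:ℤ):ℚ)*(P₀:ℚ) := by exact_mod_cast hP₀
  have hPq : ((a:ℚ)+d)/c - 12*dedekindSum d c = (P:ℚ) := by
    rw [div_sub' hcq, div_eq_iff hcq]
    linear_combination -hd1 + hPZ
  have hPq₀ : ((a:ℚ)+d)/((c₀:ℤ):ℚ) - 12*dedekindSum d c₀ = (P₀:ℚ) := by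
    rw [div_sub' hc₀q, div_eq_iff hc₀q]
    linear_combination -hd0 + hPZ₀
  rw [hPq, hPq₀]
  have hcast := congrArg (fun z : ℤ => (z:ℚ)) hPP
  push_cast at hcast
  push_cast
  linear_combination hcast
end
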